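/- arXiv:2006.13632 — 6 statements merged into one kernel-verified Lean document; each statement's English description precedes it below -/
import Mathlib

section
/- For every integer n ≥ 2, the (n−1)-matching complex M_{n−1}(K_{n,n}) of the complete bipartite graph K_{n,n} is homotopy equivalent to a sphere of dimension (n−1)² − 1. -/
/-!
A point of the realization is a nonnegative weighting of the edges of `K_{m+1,m+1}`, i.e. an
`(m+1) × (m+1)` matrix; the degree bound `m` says exactly that every row and every column contains
a zero. So, after normalizing the total weight, the realization is the cone `C` of nonnegative
matrices with a zero in every row and every column, minus the origin.

With `L` the last index, the linear map `π x = (x a b - x a L - x L b + x L L)_{a, b < L}` onto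
`ℝ^{m × m}` has as kernel the matrices `u i + v j`, and such a matrix lies in `C` only if it
vanishes. The Hungarian reduction (subtract the row minima, then the column minima) is a
retraction of all matrices onto `C` that changes `x` by an element of `ker π`. Hence `π` restricts
to a homotopy equivalence from `C \ {0}` onto `ℝ^{m × m} \ {0}`, which deformation retracts onto
the unit sphere.
-/

/-- Vertices of complete bipartite graphs: `Sum.inl i` is the vertex `a_i`,
`Sum.inr j` is the vertex `b_j`. -/
abbrev BipV : Type := ℕ ⊕ ℕ

/-- Degree of vertex `v` in the edge set `H`. -/
def degB (H : Finset (Sym2 BipV)) (v : BipV) : ℕ := (H.filter (fun e => v ∈ e)).card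

/-- Edge set of the complete bipartite graph `K_{m,n}`:
all edges `{a_i, b_j}` with `i ∈ [m]`, `j ∈ [n]`. -/
def EKbip (m n : ℕ) : Finset (Sym2 BipV) :=
  ((Finset.Icc 1 m) ×ˢ (Finset.Icc 1 n)).image (fun p => s(Sum.inl p.1, Sum.inr p.2))

/-- The `r`-matching complex of `K_{m,n}`, as its set of faces: the subsets `H` of the
edge set of `K_{m,n}` such that every vertex has degree at most `r` in `H`. -/
def MBip (m n r : ℕ) : Set (Finset (Sym2 BipV)) :=
  {H | H ⊆ EKbip m n ∧ ∀ v, degB H v ≤ r}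

/-- Geometric realization of an abstract simplicial complex `K` (given as its set of
faces, finite subsets of the vertex type `V`): the space of convex-combination
functions supported on a face of `K`, as a subspace of `V → ℝ`. -/
def realization {V : Type*} (K : Set (Finset V)) : Set (V → ℝ) :=
  {f | (∀ v, 0 ≤ f v) ∧ ∃ σ ∈ K, (∀ v, f v ≠ 0 → v ∈ σ) ∧ ∑ v ∈ σ, f v = 1}

noncomputable section

open Finset ContinuousMap

def homotopyEquivLevelSet {E : Type*} [TopologicalSpace E] [AddCommGroup E] [Module ℝ E]
    [ContinuousSMul ℝ E] (S : Set E) (T : E → ℝ) (hT : Continuous T)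
    (hT_pos : ∀ x ∈ S, 0 < T x) (hS_smul : ∀ x ∈ S, ∀ c : ℝ, 0 < c → c • x ∈ S)
    (hT_smul : ∀ x ∈ S, ∀ c : ℝ, 0 < c → T (c • x) = c * T x) :
    S ≃ₕ {x ∈ S | T x = 1} where
  toFun :=
    { toFun x := ⟨(T x)⁻¹ • x.1, hS_smul _ x.2 _ (inv_pos.2 (hT_pos _ x.2)), by
        rw [hT_smul _ x.2 _ (inv_pos.2 (hT_pos _ x.2)), inv_mul_cancel₀ (hT_pos _ x.2).ne']⟩
      continuous_toFun := by fun_prop (disch := exact fun x => (hT_pos _ x.2).ne') }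
  invFun := ⟨fun x => ⟨x.1, x.2.1⟩, by fun_prop⟩
  left_inv := by
    have hc (t : unitInterval) (x : S) : 0 < (1 - (t : ℝ)) * (T x)⁻¹ + t := by
      simpa using convex_Ioi (0 : ℝ) (inv_pos.2 (hT_pos _ x.2)) (one_pos : (0 : ℝ) < 1)
        (sub_nonneg.2 t.2.2) t.2.1 (sub_add_cancel 1 (t : ℝ))
    exact ⟨{ toFun p := ⟨((1 - (p.1 : ℝ)) * (T p.2)⁻¹ + p.1) • p.2.1,
                hS_smul _ p.2.2 _ (hc p.1 p.2)⟩
             continuous_toFun := by fun_prop (disch := exact fun p => (hT_pos _ p.2.2).ne')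
             map_zero_left x := by ext1; simp
             map_one_left x := by ext1; simp }⟩
  right_inv := by
    convert Homotopic.refl (ContinuousMap.id {x ∈ S | T x = 1}) using 2
    ext x
    simp [x.2.2]

def homotopyEquivOfRetraction {E F : Type*} [TopologicalSpace E] [AddCommGroup E] [Module ℝ E]
    [ContinuousAdd E] [ContinuousSMul ℝ E] [TopologicalSpace F] [AddCommGroup F] [Module ℝ F]
    (C : Set E) (π : E →L[ℝ] F) (ι : C(F, E)) (hπι : ∀ y, π (ι y) = y) (R : C(E, E))
    (hR : ∀ x, R x ∈ C) (hR_self : ∀ x ∈ C, R x = x) (hπR : ∀ x, π (R x) = π x) (U : Set F) :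
    {x ∈ C | π x ∈ U} ≃ₕ U where
  toFun := ⟨fun x => ⟨π x, x.2.2⟩, by fun_prop⟩
  invFun := ⟨fun y => ⟨R (ι y), hR _, by rw [hπR, hπι]; exact y.2⟩, by fun_prop⟩
  left_inv := by
    -- `π` is constant along the segment from `ι (π x)` to `x`, and `R` does not change it
    exact ⟨{ toFun p := ⟨R ((1 - (p.1 : ℝ)) • ι (π p.2) + (p.1 : ℝ) • p.2.1), hR _, by
               rw [hπR, map_add, map_smul, map_smul, hπι, ← add_smul, sub_add_cancel, one_smul]
               exact p.2.2.2⟩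
             continuous_toFun := by fun_prop
             map_zero_left x := by ext1; simp
             map_one_left x := by ext1; simp [hR_self _ x.2.1] }⟩
  right_inv := by
    convert Homotopic.refl (ContinuousMap.id U) using 2
    ext y
    simp [hπR, hπι]

def puncturedHomotopyEquivSphere (E : Type*) [NormedAddCommGroup E] [NormedSpace ℝ E] :
    {x : E | x ≠ 0} ≃ₕ Metric.sphere (0 : E) 1 :=
  (homotopyEquivLevelSet {x : E | x ≠ 0} (‖·‖) continuous_norm (fun _ hx => norm_pos_iff.2 hx)
    (fun _ hx _ hc => smul_ne_zero hc.ne' hx)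
    (fun x _ c hc => by rw [norm_smul, Real.norm_of_nonneg hc.le])).trans
    (Homeomorph.setCongr (by
      ext x
      simpa using fun h : ‖x‖ = 1 => ne_zero_of_norm_ne_zero (by simp [h]))).toHomotopyEquiv

namespace Matrix

variable {m n : Type*}

def RowReduced (x : Matrix m n ℝ) : Prop := (∀ i j, 0 ≤ x i j) ∧ ∀ i, ∃ j, x i j = 0

variable (m n) in
def reducedCone : Set (Matrix m n ℝ) := {x | x.RowReduced ∧ xᵀ.RowReduced}

theorem RowReduced.smul {x : Matrix m n ℝ} (hx : x.RowReduced) {c : ℝ} (hc : 0 ≤ c) :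
    (c • x).RowReduced := by
  refine ⟨fun i j => mul_nonneg hc (hx.1 i j), fun i => ?_⟩
  obtain ⟨j, hj⟩ := hx.2 i
  exact ⟨j, by simp [hj]⟩

theorem smul_mem_reducedCone {x : Matrix m n ℝ} (hx : x ∈ reducedCone m n) {c : ℝ} (hc : 0 ≤ c) :
    c • x ∈ reducedCone m n :=
  ⟨hx.1.smul hc, by simpa only [transpose_smul] using hx.2.smul hc⟩

theorem eq_zero_of_mem_reducedCone_of_eq_add {x : Matrix m n ℝ} (hx : x ∈ reducedCone m n)
    {u : m → ℝ} {v : n → ℝ} (huv : ∀ i j, x i j = u i + v j) : x = 0 := by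
  ext i j
  -- with zero entries `x i j'` and `x i' j`, we get `x i j = - x i' j'`
  obtain ⟨j', hj'⟩ := hx.1.2 i
  obtain ⟨i', hi'⟩ := hx.2.2 j
  have := hx.1.1 i' j'
  have := hx.1.1 i j
  simp only [transpose_apply, huv] at *
  simp only [zero_apply]
  linarith

section EntrySum

variable [Fintype m] [Fintype n]

def entrySum (x : Matrix m n ℝ) : ℝ := ∑ i, ∑ j, x i j

theorem continuous_entrySum : Continuous (entrySum : Matrix m n ℝ → ℝ) :=
  continuous_finsetSum _ fun i _ => continuous_finsetSum _ fun j _ => continuous_id.matrix_elem i j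

theorem entrySum_smul (c : ℝ) (x : Matrix m n ℝ) : entrySum (c • x) = c * entrySum x := by
  simp [entrySum, mul_sum]

theorem entrySum_pos {x : Matrix m n ℝ} (hx : ∀ i j, 0 ≤ x i j) (h0 : x ≠ 0) :
    0 < entrySum x := by
  obtain ⟨i, j, hij⟩ : ∃ i j, x i j ≠ 0 := by
    by_contra! h
    exact h0 (ext h)
  exact sum_pos' (fun i _ => sum_nonneg fun j _ => hx i j)
    ⟨i, mem_univ _, sum_pos' (fun j _ => hx i j) ⟨j, mem_univ _, (hx i j).lt_of_ne' hij⟩⟩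

def reducedConeHomotopyEquivLevelSet :
    {x ∈ reducedCone m n | x ≠ 0} ≃ₕ {x ∈ {x ∈ reducedCone m n | x ≠ 0} | entrySum x = 1} :=
  homotopyEquivLevelSet _ entrySum continuous_entrySum (fun _ hx => entrySum_pos hx.1.1.1 hx.2)
    (fun _ hx _ hc => ⟨smul_mem_reducedCone hx.1 hc.le, smul_ne_zero hc.ne' hx.2⟩)
    (fun x _ c _ => entrySum_smul c x)

end EntrySum

section RowReduce

variable [Fintype n] [Nonempty n]

def rowReduce (x : Matrix m n ℝ) : Matrix m n ℝ :=
  of fun i j => x i j - univ.inf' univ_nonempty (x i)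

theorem inf'_row_eq_zero {x : Matrix m n ℝ} {i : m} (hx : ∀ j, 0 ≤ x i j) {j₀ : n}
    (h₀ : x i j₀ = 0) : univ.inf' univ_nonempty (x i) = 0 :=
  le_antisymm (h₀ ▸ inf'_le _ (mem_univ j₀)) (le_inf' _ _ fun j _ => hx j)

theorem rowReduced_rowReduce (x : Matrix m n ℝ) : (rowReduce x).RowReduced := by
  refine ⟨fun i j => sub_nonneg.2 (inf'_le _ (mem_univ j)), fun i => ?_⟩
  obtain ⟨j, -, hj⟩ := exists_mem_eq_inf' univ_nonempty (x i)
  exact ⟨j, by simp [rowReduce, hj]⟩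

theorem RowReduced.rowReduce_eq {x : Matrix m n ℝ} (hx : x.RowReduced) : rowReduce x = x := by
  ext i j
  obtain ⟨j₀, h₀⟩ := hx.2 i
  simp [rowReduce, inf'_row_eq_zero (hx.1 i) h₀]

theorem continuous_rowReduce : Continuous (rowReduce : Matrix m n ℝ → Matrix m n ℝ) :=
  continuous_pi fun i => continuous_pi fun j => (continuous_apply_apply i j).sub
    (Continuous.finset_inf'_apply _ fun j _ => continuous_apply_apply i j)

end RowReduce

theorem RowReduced.rowReduce_transpose [Fintype m] [Nonempty m] {x : Matrix m n ℝ}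
    (hx : x.RowReduced) : (rowReduce xᵀ)ᵀ.RowReduced := by
  refine ⟨fun i j => (rowReduced_rowReduce xᵀ).1 j i, fun i => ?_⟩
  obtain ⟨j, hj⟩ := hx.2 i
  refine ⟨j, ?_⟩
  have : univ.inf' univ_nonempty (xᵀ j) = 0 := inf'_row_eq_zero (fun i => hx.1 i j) hj
  simp [rowReduce, hj, this]

section HungarianReduce

variable [Fintype m] [Fintype n] [Nonempty m] [Nonempty n]

def hungarianReduce (x : Matrix m n ℝ) : Matrix m n ℝ :=
  (rowReduce (rowReduce x)ᵀ)ᵀ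

theorem hungarianReduce_mem_reducedCone (x : Matrix m n ℝ) :
    hungarianReduce x ∈ reducedCone m n :=
  ⟨(rowReduced_rowReduce x).rowReduce_transpose, rowReduced_rowReduce _⟩

theorem hungarianReduce_eq_self {x : Matrix m n ℝ} (hx : x ∈ reducedCone m n) :
    hungarianReduce x = x := by
  rw [hungarianReduce, hx.1.rowReduce_eq, hx.2.rowReduce_eq, transpose_transpose]

theorem exists_hungarianReduce_eq_sub (x : Matrix m n ℝ) :
    ∃ (u : m → ℝ) (v : n → ℝ), ∀ i j, hungarianReduce x i j = x i j - (u i + v j) :=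
  ⟨fun i => univ.inf' univ_nonempty (x i), fun j => univ.inf' univ_nonempty ((rowReduce x)ᵀ j),
    fun i j => by simp only [hungarianReduce, rowReduce, transpose_apply, of_apply]; ring⟩

theorem continuous_hungarianReduce : Continuous (hungarianReduce : Matrix m n ℝ → _) :=
  (continuous_rowReduce.comp continuous_rowReduce.matrix_transpose).matrix_transpose

end HungarianReduce

section Gauge

variable {p q : ℕ}

def gaugeProj : Matrix (Fin (p + 1)) (Fin (q + 1)) ℝ →L[ℝ] Matrix (Fin p) (Fin q) ℝ :=
  LinearMap.toContinuousLinearMap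
    { toFun := fun x => of fun a b => x a.castSucc b.castSucc - x a.castSucc (Fin.last q)
        - x (Fin.last p) b.castSucc + x (Fin.last p) (Fin.last q)
      map_add' := fun x y => by ext; simp only [add_apply, of_apply]; ring
      map_smul' := fun c x => by
        ext
        simp only [smul_apply, of_apply, smul_eq_mul, RingHom.id_apply]
        ring }

theorem gaugeProj_apply (x : Matrix (Fin (p + 1)) (Fin (q + 1)) ℝ) (a : Fin p) (b : Fin q) :
    gaugeProj x a b = x a.castSucc b.castSucc - x a.castSucc (Fin.last q)
      - x (Fin.last p) b.castSucc + x (Fin.last p) (Fin.last q) :=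
  rfl

theorem gaugeProj_eq_zero_iff {x : Matrix (Fin (p + 1)) (Fin (q + 1)) ℝ} :
    gaugeProj x = 0 ↔ ∃ (u : Fin (p + 1) → ℝ) (v : Fin (q + 1) → ℝ), ∀ i j, x i j = u i + v j := by
  constructor
  · intro h
    refine ⟨fun i => x i (Fin.last q) - x (Fin.last p) (Fin.last q), fun j => x (Fin.last p) j,
      fun i j => ?_⟩
    induction i using Fin.lastCases with
    | last => ring
    | cast a =>
      induction j using Fin.lastCases with
      | last => ring
      | cast b =>
        have := congrFun (congrFun h a) b
        rw [gaugeProj_apply, zero_apply] at this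
        linarith
  · rintro ⟨u, v, huv⟩
    ext a b
    simp only [gaugeProj_apply, huv, zero_apply]
    ring

def extendByZero : C(Matrix (Fin p) (Fin q) ℝ, Matrix (Fin (p + 1)) (Fin (q + 1)) ℝ) where
  toFun y := of fun i j => Fin.lastCases 0 (fun a => Fin.lastCases 0 (y a) j) i
  continuous_toFun := by
    refine continuous_pi fun i => continuous_pi fun j => ?_
    induction i using Fin.lastCases with
    | last => simpa using continuous_const
    | cast a =>
      induction j using Fin.lastCases with
      | last => simpa using continuous_const
      | cast b => simpa using continuous_id.matrix_elem a b

theorem extendByZero_apply (y : Matrix (Fin p) (Fin q) ℝ) (i : Fin (p + 1)) (j : Fin (q + 1)) :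
    extendByZero y i j = Fin.lastCases 0 (fun a => Fin.lastCases 0 (y a) j) i :=
  rfl

theorem gaugeProj_extendByZero (y : Matrix (Fin p) (Fin q) ℝ) :
    gaugeProj (extendByZero y) = y := by
  ext a b
  simp [gaugeProj_apply, extendByZero_apply]

theorem gaugeProj_hungarianReduce (x : Matrix (Fin (p + 1)) (Fin (q + 1)) ℝ) :
    gaugeProj (hungarianReduce x) = gaugeProj x := by
  obtain ⟨u, v, h⟩ := exists_hungarianReduce_eq_sub x
  have : gaugeProj (x - hungarianReduce x) = 0 := gaugeProj_eq_zero_iff.2 ⟨u, v, by simp [h]⟩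
  rwa [map_sub, sub_eq_zero, eq_comm] at this

theorem gaugeProj_ne_zero_iff {x : Matrix (Fin (p + 1)) (Fin (q + 1)) ℝ}
    (hx : x ∈ reducedCone _ _) : gaugeProj x ≠ 0 ↔ x ≠ 0 := by
  refine not_congr ⟨fun h => ?_, fun h => h ▸ map_zero _⟩
  obtain ⟨u, v, huv⟩ := gaugeProj_eq_zero_iff.1 h
  exact eq_zero_of_mem_reducedCone_of_eq_add hx huv

def reducedConeHomotopyEquivPunctured {F : Type*} [TopologicalSpace F] [AddCommGroup F]
    [Module ℝ F] (e : Matrix (Fin p) (Fin q) ℝ ≃L[ℝ] F) :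
    {x ∈ reducedCone (Fin (p + 1)) (Fin (q + 1)) | x ≠ 0} ≃ₕ {y : F | y ≠ 0} :=
  (Homeomorph.setCongr (by ext x; simpa using fun hx => (gaugeProj_ne_zero_iff hx).symm)
    ).toHomotopyEquiv.trans
    (homotopyEquivOfRetraction _ (e.toContinuousLinearMap ∘L gaugeProj)
      (extendByZero.comp ⟨e.symm, e.symm.continuous⟩) (fun y => by simp [gaugeProj_extendByZero])
      ⟨hungarianReduce, continuous_hungarianReduce⟩ hungarianReduce_mem_reducedCone
      (fun _ => hungarianReduce_eq_self) (fun x => by simp [gaugeProj_hungarianReduce]) _)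

end Gauge

end Matrix

namespace MatchingComplex

open Matrix

variable {m : ℕ}

def bipEdge (i j : Fin (m + 1)) : Sym2 BipV := s(.inl (i + 1 : ℕ), .inr (j + 1 : ℕ))

theorem bipEdge_inj {i j i' j' : Fin (m + 1)} :
    bipEdge i j = bipEdge i' j' ↔ i = i' ∧ j = j' := by
  simp [bipEdge, Fin.val_inj]

theorem bipEdge_injective : Function.Injective (Function.uncurry (bipEdge (m := m))) :=
  fun _ _ h => Prod.ext_iff.2 (bipEdge_inj.1 h)

theorem inl_mem_bipEdge {k : ℕ} {i j : Fin (m + 1)} : .inl k ∈ bipEdge i j ↔ k = i + 1 := by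
  simp [bipEdge]

theorem inr_mem_bipEdge {k : ℕ} {i j : Fin (m + 1)} : .inr k ∈ bipEdge i j ↔ k = j + 1 := by
  simp [bipEdge]

theorem EKbip_eq_image :
    EKbip (m + 1) (m + 1) = univ.image (Function.uncurry (bipEdge (m := m))) := by
  ext e
  simp only [EKbip, mem_image, mem_product, mem_Icc, mem_univ, true_and, Prod.exists,
    Function.uncurry_apply_pair, bipEdge]
  constructor
  · rintro ⟨a, b, ⟨⟨ha, ha'⟩, hb, hb'⟩, rfl⟩
    exact ⟨⟨a - 1, by omega⟩, ⟨b - 1, by omega⟩, by congr <;> simp <;> omega⟩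
  · rintro ⟨i, j, rfl⟩
    exact ⟨i + 1, j + 1, by omega, rfl⟩

theorem mem_EKbip {e : Sym2 BipV} :
    e ∈ EKbip (m + 1) (m + 1) ↔ ∃ i j, bipEdge (m := m) i j = e := by
  simp [EKbip_eq_image]

theorem sum_EKbip (f : Sym2 BipV → ℝ) :
    ∑ e ∈ EKbip (m + 1) (m + 1), f e = ∑ i, ∑ j, f (bipEdge (m := m) i j) := by
  rw [EKbip_eq_image, sum_image fun p _ q _ h => bipEdge_injective h, ← Fintype.sum_prod_type']
  rfl

theorem degB_le_iff {σ : Finset (Sym2 BipV)} {v : BipV} {g : Fin (m + 1) → Sym2 BipV}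
    (hg : Function.Injective g) (hv : ∀ j, v ∈ g j) (hσ : ∀ e ∈ σ, v ∈ e → ∃ j, g j = e) :
    degB σ v ≤ m ↔ ∃ j, g j ∉ σ := by
  have : σ.filter (v ∈ ·) = (univ.filter (g · ∈ σ)).image g := by
    ext e
    simp only [mem_filter, mem_image, mem_univ, true_and]
    constructor
    · rintro ⟨he, hve⟩
      obtain ⟨j, rfl⟩ := hσ e he hve
      exact ⟨j, he, rfl⟩
    · rintro ⟨j, hj, rfl⟩
      exact ⟨hj, hv j⟩
  have hcard := card_lt_iff_ne_univ (univ.filter (g · ∈ σ))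
  rw [Fintype.card_fin, Nat.lt_succ_iff] at hcard
  rw [degB, this, card_image_of_injective _ hg, hcard, Ne, filter_eq_self]
  simp

theorem mem_MBip_iff {σ : Finset (Sym2 BipV)} :
    σ ∈ MBip (m + 1) (m + 1) m ↔ σ ⊆ EKbip (m + 1) (m + 1) ∧
      (∀ i : Fin (m + 1), ∃ j, bipEdge i j ∉ σ) ∧ ∀ j : Fin (m + 1), ∃ i, bipEdge i j ∉ σ := by
  refine and_congr_right fun hσ => ?_
  have hrow (i : Fin (m + 1)) : degB σ (.inl (i + 1 : ℕ)) ≤ m ↔ ∃ j, bipEdge i j ∉ σ := by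
    refine degB_le_iff (fun j j' h => (bipEdge_inj.1 h).2) (fun j => inl_mem_bipEdge.2 rfl) ?_
    intro e he hv
    obtain ⟨i', j, rfl⟩ := mem_EKbip.1 (hσ he)
    exact ⟨j, by rw [inl_mem_bipEdge, add_left_inj, Fin.val_inj] at hv; rw [hv]⟩
  have hcol (j : Fin (m + 1)) : degB σ (.inr (j + 1 : ℕ)) ≤ m ↔ ∃ i, bipEdge i j ∉ σ := by
    refine degB_le_iff (fun i i' h => (bipEdge_inj.1 h).1) (fun i => inr_mem_bipEdge.2 rfl) ?_
    intro e he hv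
    obtain ⟨i, j', rfl⟩ := mem_EKbip.1 (hσ he)
    exact ⟨i, by rw [inr_mem_bipEdge, add_left_inj, Fin.val_inj] at hv; rw [hv]⟩
  have hzero (v : BipV) (hv : ∀ i j, v ∉ bipEdge (m := m) i j) : degB σ v = 0 := by
    refine card_eq_zero.2 (filter_eq_empty_iff.2 fun e he => ?_)
    obtain ⟨i, j, rfl⟩ := mem_EKbip.1 (hσ he)
    exact hv i j
  refine ⟨fun h => ⟨fun i => (hrow i).1 (h _), fun j => (hcol j).1 (h _)⟩, ?_⟩
  rintro ⟨hr, hc⟩ (k | k)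
  · by_cases hk : ∃ i : Fin (m + 1), (i + 1 : ℕ) = k
    · obtain ⟨i, rfl⟩ := hk
      exact (hrow i).2 (hr i)
    · rw [hzero _ fun i j h => hk ⟨i, (inl_mem_bipEdge.1 h).symm⟩]
      exact m.zero_le
  · by_cases hk : ∃ j : Fin (m + 1), (j + 1 : ℕ) = k
    · obtain ⟨j, rfl⟩ := hk
      exact (hcol j).2 (hc j)
    · rw [hzero _ fun i j h => hk ⟨j, (inr_mem_bipEdge.1 h).symm⟩]
      exact m.zero_le

def edgeMatrix (f : Sym2 BipV → ℝ) : Matrix (Fin (m + 1)) (Fin (m + 1)) ℝ :=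
  of fun i j => f (bipEdge i j)

def edgeWeights (x : Matrix (Fin (m + 1)) (Fin (m + 1)) ℝ) : Sym2 BipV → ℝ :=
  Function.extend (Function.uncurry bipEdge) (Function.uncurry x) 0

theorem edgeWeights_bipEdge (x : Matrix (Fin (m + 1)) (Fin (m + 1)) ℝ) (i j : Fin (m + 1)) :
    edgeWeights x (bipEdge i j) = x i j :=
  bipEdge_injective.extend_apply (Function.uncurry x) 0 (i, j)

theorem edgeWeights_of_notMem {x : Matrix (Fin (m + 1)) (Fin (m + 1)) ℝ} {e : Sym2 BipV}
    (he : e ∉ EKbip (m + 1) (m + 1)) : edgeWeights x e = 0 :=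
  Function.extend_apply' _ _ _ fun ⟨p, hp⟩ => he (mem_EKbip.2 ⟨p.1, p.2, hp⟩)

theorem edgeMatrix_edgeWeights (x : Matrix (Fin (m + 1)) (Fin (m + 1)) ℝ) :
    edgeMatrix (edgeWeights x) = x := by
  ext i j
  exact edgeWeights_bipEdge x i j

theorem continuous_edgeWeights : Continuous (edgeWeights (m := m)) := by
  refine continuous_pi fun e => ?_
  by_cases he : e ∈ EKbip (m + 1) (m + 1)
  · obtain ⟨i, j, rfl⟩ := mem_EKbip.1 he
    simp only [edgeWeights_bipEdge]
    exact continuous_id.matrix_elem i j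
  · simpa only [edgeWeights_of_notMem he] using continuous_const

theorem eq_zero_of_mem_realization {f : Sym2 BipV → ℝ}
    (hf : f ∈ realization (MBip (m + 1) (m + 1) m)) {e : Sym2 BipV}
    (he : e ∉ EKbip (m + 1) (m + 1)) : f e = 0 := by
  obtain ⟨-, σ, hσ, hsupp, -⟩ := hf
  by_contra h
  exact he (hσ.1 (hsupp e h))

theorem edgeWeights_edgeMatrix {f : Sym2 BipV → ℝ}
    (hf : f ∈ realization (MBip (m + 1) (m + 1) m)) :
    edgeWeights (edgeMatrix (m := m) f) = f := by
  funext e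
  by_cases he : e ∈ EKbip (m + 1) (m + 1)
  · obtain ⟨i, j, rfl⟩ := mem_EKbip.1 he
    exact edgeWeights_bipEdge _ i j
  · rw [edgeWeights_of_notMem he, eq_zero_of_mem_realization hf he]

theorem edgeMatrix_mem {f : Sym2 BipV → ℝ} (hf : f ∈ realization (MBip (m + 1) (m + 1) m)) :
    edgeMatrix f ∈
      {x ∈ {x ∈ reducedCone (Fin (m + 1)) (Fin (m + 1)) | x ≠ 0} | entrySum x = 1} := by
  obtain ⟨hpos, σ, hσ, hsupp, hsum⟩ := hf
  obtain ⟨hσE, hrow, hcol⟩ := mem_MBip_iff.1 hσ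
  have hzero {i j : Fin (m + 1)} (h : bipEdge i j ∉ σ) : edgeMatrix f i j = 0 :=
    not_not.1 (mt (hsupp _) h)
  have h1 : entrySum (edgeMatrix (m := m) f) = 1 := by
    rw [← hsum, sum_subset hσE fun e _ he => not_not.1 (mt (hsupp e) he), sum_EKbip]
    rfl
  refine ⟨⟨⟨⟨fun i j => hpos _, fun i => ?_⟩, fun i j => hpos _, fun j => ?_⟩, ?_⟩, h1⟩
  · obtain ⟨j, hj⟩ := hrow i
    exact ⟨j, hzero hj⟩
  · obtain ⟨i, hi⟩ := hcol j
    exact ⟨i, hzero hi⟩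
  · intro h
    simp [h, entrySum] at h1

theorem edgeWeights_mem_realization {x : Matrix (Fin (m + 1)) (Fin (m + 1)) ℝ}
    (hx : x ∈ reducedCone _ _) (h1 : entrySum x = 1) :
    edgeWeights x ∈ realization (MBip (m + 1) (m + 1) m) := by
  set σ := (EKbip (m + 1) (m + 1)).filter (edgeWeights x · ≠ 0)
  have hzero {i j : Fin (m + 1)} (h : x i j = 0) : bipEdge i j ∉ σ := by
    simp [σ, edgeWeights_bipEdge, h]
  refine ⟨fun e => ?_, σ, mem_MBip_iff.2 ⟨filter_subset _ _, fun i => ?_, fun j => ?_⟩,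
    fun e he => mem_filter.2 ⟨by_contra fun h => he (edgeWeights_of_notMem h), he⟩, ?_⟩
  · by_cases he : e ∈ EKbip (m + 1) (m + 1)
    · obtain ⟨i, j, rfl⟩ := mem_EKbip.1 he
      exact (edgeWeights_bipEdge x i j).symm ▸ hx.1.1 i j
    · exact (edgeWeights_of_notMem he).ge
  · obtain ⟨j, hj⟩ := hx.1.2 i
    exact ⟨j, hzero hj⟩
  · obtain ⟨i, hi⟩ := hx.2.2 j
    exact ⟨i, hzero hi⟩
  · rw [sum_filter_ne_zero, sum_EKbip, ← h1]
    simp only [edgeWeights_bipEdge, entrySum]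

def realizationHomeomorph (m : ℕ) :
    realization (MBip (m + 1) (m + 1) m) ≃ₜ
      {x ∈ {x ∈ reducedCone (Fin (m + 1)) (Fin (m + 1)) | x ≠ 0} | entrySum x = 1} where
  toFun f := ⟨edgeMatrix f, edgeMatrix_mem f.2⟩
  invFun x := ⟨edgeWeights x, edgeWeights_mem_realization x.2.1.1 x.2.2⟩
  left_inv f := Subtype.ext (edgeWeights_edgeMatrix f.2)
  right_inv x := Subtype.ext (edgeMatrix_edgeWeights x.1)
  continuous_toFun := Continuous.subtype_mk (continuous_matrix fun i j =>
    (continuous_apply (bipEdge i j)).comp continuous_subtype_val) _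
  continuous_invFun := (continuous_edgeWeights.comp continuous_subtype_val).subtype_mk _

end MatchingComplex

end

open MatchingComplex Matrix in
/-- For `n ≥ 2`, the `(n-1)`-matching complex of the complete bipartite graph `K_{n,n}`
is homotopy equivalent to a sphere of dimension `(n-1)² - 1` (the unit sphere of
`ℝ^{(n-1)²}`). -/
theorem matching_complex_complete_bipartite_homotopy_type (n : ℕ) (hn : 2 ≤ n) :
    Nonempty (ContinuousMap.HomotopyEquiv (realization (MBip n n (n - 1)))
      (Metric.sphere (0 : EuclideanSpace ℝ (Fin ((n - 1) ^ 2))) 1)) := by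
  obtain ⟨m, rfl⟩ : ∃ m, n = m + 1 := ⟨n - 1, by omega⟩
  rw [Nat.add_sub_cancel]
  let e : Matrix (Fin m) (Fin m) ℝ ≃L[ℝ] EuclideanSpace ℝ (Fin (m ^ 2)) :=
    (LinearEquiv.ofFinrankEq _ _ (by simp [Module.finrank_matrix, sq])).toContinuousLinearEquiv
  exact ⟨(realizationHomeomorph m).toHomotopyEquiv.trans <|
    reducedConeHomotopyEquivLevelSet.symm.trans <|
    (reducedConeHomotopyEquivPunctured e).trans (puncturedHomotopyEquivSphere _)⟩
end

section
/- Let n ≥ 3. Define A_{1,1} = M_{n−2}(K_n) and, for i = 2,...,n, N_{1,i} = {G ∈ A_{1,i−1} : G ∖ {{1,i}} ∈ A_{1,i−1} and G ∪ {{1,i}} ∈ A_{1,i−1}} and A_{1,i} = A_{1,i−1} ∖ N_{1,i}. Then A_{1,n} = B_{1,2} ⊔ C_1, a disjoint union, where B_{1,2} = {G ∈ A_{1,1} : {1,2} ∉ G, deg_G(2) < n−2, deg_G(1) = n−2} and C_1 = {G ∈ A_{1,1} : for every i ∈ {2,...,n}, {1,i} ∉ G and deg_G(i) = n−2}. -/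
/-- Degree of vertex `v` in the edge set `H`. -/
def deg (H : Finset (Sym2 ℕ)) (v : ℕ) : ℕ := (H.filter (fun e => v ∈ e)).card

/-- Edge set of the complete graph `K_n` on vertex set `{1,…,n}`. -/
def EK (n : ℕ) : Finset (Sym2 ℕ) := (Finset.Icc 1 n).sym2.filter (fun e => ¬ e.IsDiag)

/-- The `r`-matching complex of `K_n`, as its set of faces. -/
def MK (n r : ℕ) : Set (Finset (Sym2 ℕ)) := {H | H ⊆ EK n ∧ ∀ v, deg H v ≤ r}

/-!
Let `C(i)` be the set of cells satisfying the condition that defines `C_1` for `j ≤ i` only,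
so that `C(1) = M_{n-2}(K_n)`. The cells surviving the matchings with `{1,2}, …, {1,i}` are
exactly `B_{1,2} ∪ C(i)`. In the matching with `{1,i+1}`, a cell of `B_{1,2}` is never
matched: adding `{1,i+1}` overflows vertex `1`, and removing it leaves both `deg(1)` and
`deg(2)` below `n - 2`, so the result lies in neither part. A cell of `C(i)` containing
`{1,i+1}` is matched with the cell without it; one not containing it is matched iff
`{1,i+1}` can be added, i.e. iff `deg(1), deg(i+1) < n - 2`. For `i ≥ 2` the bound on
`deg(1)` is automatic, as `1` can only be joined to `i+2, …, n`; for `i = 1` it fails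
exactly on `B_{1,2}`. Finally `deg(1) = 0` on `C(n)`, which separates it from `B_{1,2}`.
-/

namespace MatchingComplex

variable {n r i k v : ℕ} {G : Finset (Sym2 ℕ)} {e : Sym2 ℕ}

lemma deg_erase_of_notMem (hv : v ∉ e) : deg (G.erase e) v = deg G v := by
  rw [deg, deg, Finset.filter_erase, Finset.erase_eq_of_notMem (by simp [hv])]

lemma deg_erase_add_one (hv : v ∈ e) (he : e ∈ G) : deg (G.erase e) v + 1 = deg G v := by
  rw [deg, deg, Finset.filter_erase]
  exact Finset.card_erase_add_one (Finset.mem_filter.2 ⟨he, hv⟩)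

lemma deg_erase_le : deg (G.erase e) v ≤ deg G v :=
  Finset.card_le_card (Finset.filter_subset_filter _ (Finset.erase_subset _ _))

lemma deg_insert_of_notMem (hv : v ∉ e) : deg (insert e G) v = deg G v := by
  rw [deg, deg, Finset.filter_insert, if_neg hv]

lemma deg_insert_of_mem (hv : v ∈ e) (he : e ∉ G) : deg (insert e G) v = deg G v + 1 := by
  rw [deg, deg, Finset.filter_insert, if_pos hv,
    Finset.card_insert_of_notMem fun h => he (Finset.mem_filter.1 h).1]

@[simp]
lemma mk_mem_EK_iff {a b : ℕ} :
    s(a, b) ∈ EK n ↔ a ∈ Finset.Icc 1 n ∧ b ∈ Finset.Icc 1 n ∧ a ≠ b := by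
  simp [EK, and_assoc]

lemma exists_eq_mk_of_mem_EK (he : e ∈ EK n) (hv : v ∈ e) :
    ∃ w ∈ Finset.Icc 1 n, w ≠ v ∧ e = s(v, w) := by
  obtain ⟨hsym, hdiag⟩ := Finset.mem_filter.1 he
  exact ⟨_, Finset.mem_sym2_iff.1 hsym _ (Sym2.other_mem hv), Sym2.other_ne hdiag hv,
    (Sym2.other_spec hv).symm⟩

lemma deg_one_le_of_forall_notMem (hG : G ⊆ EK n) (h : ∀ j, 2 ≤ j → j ≤ i → s(1, j) ∉ G) :
    deg G 1 ≤ n - i := by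
  have hsub : G.filter (1 ∈ ·) ⊆ (Finset.Icc (i + 1) n).image (s(1, ·)) := by
    intro e he
    obtain ⟨heG, h1⟩ := Finset.mem_filter.1 he
    obtain ⟨w, hw, hw1, rfl⟩ := exists_eq_mk_of_mem_EK (hG heG) h1
    rw [Finset.mem_Icc] at hw
    refine Finset.mem_image_of_mem _ (Finset.mem_Icc.2 ⟨?_, hw.2⟩)
    by_contra hwi
    exact h w (by omega) (by omega) heG
  calc deg G 1 ≤ _ := Finset.card_le_card hsub
    _ ≤ _ := Finset.card_image_le
    _ = n - i := by simp

lemma erase_mem_MK (hG : G ∈ MK n r) (e : Sym2 ℕ) : G.erase e ∈ MK n r :=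
  ⟨(Finset.erase_subset _ _).trans hG.1, fun v => deg_erase_le.trans (hG.2 v)⟩

lemma insert_mem_MK_iff {a b : ℕ} (hG : G ∈ MK n r) (he : s(a, b) ∈ EK n) (heG : s(a, b) ∉ G) :
    insert s(a, b) G ∈ MK n r ↔ deg G a < r ∧ deg G b < r := by
  constructor
  · rintro ⟨-, hdeg⟩
    have ha := hdeg a
    have hb := hdeg b
    rw [deg_insert_of_mem (Sym2.mem_mk_left a b) heG] at ha
    rw [deg_insert_of_mem (Sym2.mem_mk_right a b) heG] at hb
    omega
  · rintro ⟨ha, hb⟩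
    refine ⟨Finset.insert_subset he hG.1, fun v => ?_⟩
    by_cases hv : v ∈ s(a, b)
    · rw [deg_insert_of_mem hv heG]
      rcases Sym2.mem_iff.1 hv with rfl | rfl <;> omega
    · rw [deg_insert_of_notMem hv]
      exact hG.2 v

/-- The paper's `N_{1,i}` is `matched A_{1,i-1} {1,i}`. -/
def matched {α : Type*} [DecidableEq α] (S : Set (Finset α)) (e : α) : Set (Finset α) :=
  {G ∈ S | G.erase e ∈ S ∧ insert e G ∈ S}

section matched

variable {α : Type*} [DecidableEq α] {S : Set (Finset α)} {H : Finset α} {a : α}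

lemma mem_matched_iff_erase_mem (hH : H ∈ S) (ha : a ∈ H) :
    H ∈ matched S a ↔ H.erase a ∈ S := by
  simp [matched, hH, Finset.insert_eq_of_mem ha]

lemma mem_matched_iff_insert_mem (hH : H ∈ S) (ha : a ∉ H) :
    H ∈ matched S a ↔ insert a H ∈ S := by
  simp [matched, hH, Finset.erase_eq_of_notMem ha]

end matched

/-- The paper's `B_{1,2}`. -/
def B (n : ℕ) : Set (Finset (Sym2 ℕ)) :=
  {G ∈ MK n (n - 2) | s(1, 2) ∉ G ∧ deg G 2 < n - 2 ∧ deg G 1 = n - 2}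

/-- `C n n` is the paper's `C_1`, and `B n ∪ C n i` its `A_{1,i}`. -/
def C (n i : ℕ) : Set (Finset (Sym2 ℕ)) :=
  {G ∈ MK n (n - 2) | ∀ j, 2 ≤ j → j ≤ i → s(1, j) ∉ G ∧ deg G j = n - 2}

lemma B_subset_MK : B n ⊆ MK n (n - 2) := fun _ hG => hG.1

lemma C_subset_MK : C n i ⊆ MK n (n - 2) := fun _ hG => hG.1

lemma B_union_C_one : B n ∪ C n 1 = MK n (n - 2) := by
  have hC : C n 1 = MK n (n - 2) :=
    Set.ext fun _ => ⟨fun h => h.1, fun h => ⟨h, fun j hj hj1 => by omega⟩⟩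
  rw [hC, Set.union_eq_right]
  exact B_subset_MK

lemma mem_C_succ (hi : 1 ≤ i) :
    G ∈ C n (i + 1) ↔ G ∈ C n i ∧ s(1, i + 1) ∉ G ∧ deg G (i + 1) = n - 2 := by
  constructor
  · rintro ⟨hM, h⟩
    exact ⟨show G ∈ C n i from ⟨hM, fun j hj hji => h j hj (by omega)⟩, h (i + 1) (by omega) le_rfl⟩
  · rintro ⟨⟨hM, h⟩, hi⟩
    refine ⟨hM, fun j hj hji => ?_⟩
    rcases Nat.lt_or_eq_of_le hji with hji | rfl
    exacts [h j hj (by omega), hi]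

lemma notMem_mk_one (hj : 2 ≤ j) (hjk : j ≠ k) : j ∉ s(1, k) := by
  rw [Sym2.mem_iff]
  omega

lemma mk_one_ne (hj : 2 ≤ j) (hjk : j ≠ k) : s(1, j) ≠ s(1, k) := by
  rw [Ne, Sym2.eq_iff]
  omega

lemma erase_mem_C (hik : i < k) (hG : G ∈ C n i) : G.erase s(1, k) ∈ C n i := by
  refine ⟨erase_mem_MK hG.1 _, fun j hj hji => ?_⟩
  rw [Finset.mem_erase, deg_erase_of_notMem (notMem_mk_one hj (by omega))]
  exact ⟨fun h => (hG.2 j hj hji).1 h.2, (hG.2 j hj hji).2⟩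

lemma insert_mem_C (hik : i < k) (hG : G ∈ C n i) (hM : insert s(1, k) G ∈ MK n (n - 2)) :
    insert s(1, k) G ∈ C n i := by
  refine ⟨hM, fun j hj hji => ?_⟩
  rw [Finset.mem_insert, deg_insert_of_notMem (notMem_mk_one hj (by omega))]
  exact ⟨not_or.2 ⟨mk_one_ne hj (by omega), (hG.2 j hj hji).1⟩, (hG.2 j hj hji).2⟩

lemma B_notMem_matched (hi : 1 ≤ i) (hin : i + 1 ≤ n) (hG : G ∈ B n) :
    G ∉ matched (B n ∪ C n i) s(1, i + 1) := by
  have hS : G ∈ B n ∪ C n i := Or.inl hG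
  obtain ⟨-, h12, hd2, hd1⟩ := hG
  by_cases he : s(1, i + 1) ∈ G
  · have hi2 : 2 ≤ i := by
      by_contra
      obtain rfl : i = 1 := by omega
      exact h12 he
    rw [mem_matched_iff_erase_mem hS he]
    have hd1' := deg_erase_add_one (Sym2.mem_mk_left 1 (i + 1)) he
    rintro (⟨-, -, -, hd1''⟩ | ⟨-, hC⟩)
    · omega
    · have := (hC 2 le_rfl hi2).2
      rw [deg_erase_of_notMem (notMem_mk_one le_rfl (by omega))] at this
      omega
  · rw [mem_matched_iff_insert_mem hS he]
    intro hins
    have := (Set.union_subset B_subset_MK C_subset_MK hins).2 1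
    rw [deg_insert_of_mem (Sym2.mem_mk_left 1 (i + 1)) he] at this
    omega

lemma deg_one_lt_of_mem_C (hin : i + 1 ≤ n) (hG : G ∈ C n i) (hB : G ∉ B n)
    (he : s(1, i + 1) ∉ G) (hdeg : deg G (i + 1) < n - 2) : deg G 1 < n - 2 := by
  obtain hi | rfl | rfl : 2 ≤ i ∨ i = 1 ∨ i = 0 := by omega
  · have := deg_one_le_of_forall_notMem hG.1.1 (i := i + 1) fun j hj hji => by
      rcases Nat.lt_or_eq_of_le hji with hji | rfl
      exacts [(hG.2 j hj (by omega)).1, he]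
    omega
  · have := hG.1.2 1
    by_contra
    exact hB ⟨hG.1, he, hdeg, by omega⟩
  · exact hdeg

lemma mem_matched_iff_notMem (hi : 1 ≤ i) (hin : i + 1 ≤ n) (hG : G ∈ B n ∪ C n i) :
    G ∈ matched (B n ∪ C n i) s(1, i + 1) ↔ G ∉ B n ∪ C n (i + 1) := by
  by_cases hB : G ∈ B n
  · simp [hB, B_notMem_matched hi hin hB]
  have hC : G ∈ C n i := hG.resolve_left hB
  simp only [Set.mem_union, hB, false_or, mem_C_succ hi, hC, true_and, not_and_or, not_not]
  by_cases he : s(1, i + 1) ∈ G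
  · simpa [he, mem_matched_iff_erase_mem hG he] using Or.inr (erase_mem_C (by omega) hC)
  have hins : insert s(1, i + 1) G ∈ B n ∪ C n i ↔ insert s(1, i + 1) G ∈ MK n (n - 2) :=
    ⟨fun h => Set.union_subset B_subset_MK C_subset_MK h,
      fun h => Or.inr (insert_mem_C (by omega) hC h)⟩
  rw [mem_matched_iff_insert_mem hG he, hins, insert_mem_MK_iff hC.1 (by simp; omega) he]
  have hd := hC.1.2 (i + 1)
  have := deg_one_lt_of_mem_C hin hC hB he
  simp only [he, false_or]
  omega

lemma union_diff_matched (hi : 1 ≤ i) (hin : i + 1 ≤ n) :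
    (B n ∪ C n i) \ matched (B n ∪ C n i) s(1, i + 1) = B n ∪ C n (i + 1) := by
  ext G
  rw [Set.mem_sdiff]
  constructor
  · rintro ⟨hG, hm⟩
    by_contra h
    exact hm ((mem_matched_iff_notMem hi hin hG).2 h)
  · intro hG
    have hG' : G ∈ B n ∪ C n i := hG.imp_right fun h => ((mem_C_succ hi).1 h).1
    exact ⟨hG', fun hm => (mem_matched_iff_notMem hi hin hG').1 hm hG⟩

lemma disjoint_B_C (hn : 3 ≤ n) : Disjoint (B n) (C n n) := by
  refine Set.disjoint_left.2 fun G hB hC => ?_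
  have := deg_one_le_of_forall_notMem hC.1.1 fun j hj hjn => (hC.2 j hj hjn).1
  have := hB.2.2.2
  omega

end MatchingComplex

open MatchingComplex in
/-- Claim 3.3 (Step 1): starting from `A_{1,1} = M_{n-2}(K_n)` and performing, for
`i = 2, …, n`, the element matching using the vertex `{1,i}` (removing
`N_{1,i} = {G ∈ A_{1,i-1} : G - {1,i} ∈ A_{1,i-1} and G + {1,i} ∈ A_{1,i-1}}`),
the remaining set of critical cells is `A_{1,n} = B_{1,2} ⊔ C_1`. -/
theorem step_one_critical_cells (n : ℕ) (hn : 3 ≤ n)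
    (A : ℕ → Set (Finset (Sym2 ℕ)))
    (hA1 : A 1 = MK n (n - 2))
    (hstep : ∀ i, 2 ≤ i → i ≤ n →
      A i = A (i - 1) \
        {G ∈ A (i - 1) | G.erase s(1, i) ∈ A (i - 1) ∧ insert s(1, i) G ∈ A (i - 1)}) :
    let B12 : Set (Finset (Sym2 ℕ)) :=
      {G ∈ A 1 | s(1, 2) ∉ G ∧ deg G 2 < n - 2 ∧ deg G 1 = n - 2}
    let C1 : Set (Finset (Sym2 ℕ)) :=
      {G ∈ A 1 | ∀ i, 2 ≤ i → i ≤ n → s(1, i) ∉ G ∧ deg G i = n - 2}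
    A n = B12 ∪ C1 ∧ Disjoint B12 C1 := by
  have hA : ∀ i, 1 ≤ i → i ≤ n → A i = B n ∪ C n i := by
    intro i hi
    induction i, hi using Nat.le_induction with
    | base => exact fun _ => hA1.trans B_union_C_one.symm
    | succ i hi ih =>
      intro hin
      rw [hstep (i + 1) (by omega) hin, Nat.add_sub_cancel, ih (by omega)]
      exact union_diff_matched hi hin
  intro B12 C1
  have hB : B12 = B n := by simp only [B12, hA1]; rfl
  have hC : C1 = C n n := by simp only [C1, hA1]; rfl
  rw [hB, hC, hA n (by omega) le_rfl]
  exact ⟨rfl, disjoint_B_C hn⟩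
end

section
/- Let n ≥ 4 and 2 ≤ k ≤ n−1. Set A_{k,k} = B_{k−1,k} = {G ∈ M_{n−2}(K_n) : {i,i+1} ∉ G for every i ∈ [k−1], deg_G(1) = n−2, deg_G(i) = n−3 for every i ∈ {2,...,k−1}, and deg_G(k) < n−2}, and define N_{k,k+1} = {G ∈ A_{k,k} : G ∖ {{k,k+1}} ∈ A_{k,k} and G ∪ {{k,k+1}} ∈ A_{k,k}} and A_{k,k+1} = A_{k,k} ∖ N_{k,k+1}. Then A_{k,k+1} = B_{k,k+1} ⊔ C_{k,k+1}, a disjoint union, where B_{k,k+1} = {G ∈ A_{k,k} : {k,k+1} ∉ G, deg_G(k+1) < n−2, deg_G(k) = n−3} and C_{k,k+1} = {G ∈ A_{k,k} : {k,k+1} ∉ G, deg_G(k+1) = n−2}. -/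
/-!
Write `e = {k, k+1}`. Since `k ≥ 2`, adding or removing `e` does not touch vertex `1`, the
vertices `2, …, k-1`, or the edges `{i, i+1}` with `i < k`. Hence `A_{k,k}` is closed under
removing `e`, and a graph `G ∈ A_{k,k}` lies in `N_{k,k+1}` exactly when `G ∪ {e} ∈ A_{k,k}`:
either `e ∈ G`, or `e ∉ G` and there is room for `e` at both ends, i.e.
`deg_G(k) < n-3` and `deg_G(k+1) < n-2`. The complement of this condition inside
`A_{k,k}` is `B_{k,k+1} ∪ C_{k,k+1}`, and `B`, `C` are separated by `deg_G(k+1)`.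
-/

section deg

variable {G H : Finset (Sym2 ℕ)} {e : Sym2 ℕ} {v : ℕ}

lemma deg_mono (h : G ⊆ H) (v : ℕ) : deg G v ≤ deg H v :=
  Finset.card_le_card (Finset.filter_subset_filter _ h)

lemma deg_insert_of_notMem (hv : v ∉ e) : deg (insert e G) v = deg G v := by
  rw [deg, Finset.filter_insert, if_neg hv, deg]

lemma deg_insert_of_mem (hv : v ∈ e) (he : e ∉ G) : deg (insert e G) v = deg G v + 1 := by
  rw [deg, Finset.filter_insert, if_pos hv,
    Finset.card_insert_of_notMem (fun h => he (Finset.mem_of_mem_filter _ h)), deg]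

lemma deg_erase_of_notMem (hv : v ∉ e) : deg (G.erase e) v = deg G v := by
  rw [deg, Finset.filter_erase, Finset.erase_eq_of_notMem (by simp [hv]), deg]

end deg

lemma mk_succ_mem_EK {n k : ℕ} (hk : 1 ≤ k) (hkn : k + 1 ≤ n) : s(k, k + 1) ∈ EK n := by
  simp only [EK, Finset.mem_filter, Finset.mk_mem_sym2_iff, Finset.mem_Icc, Sym2.mk_isDiag_iff]
  omega

lemma mem_MK_of_subset {n r : ℕ} {G H : Finset (Sym2 ℕ)} (hGH : G ⊆ H) (hH : H ∈ MK n r) :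
    G ∈ MK n r :=
  ⟨hGH.trans hH.1, fun v => (deg_mono hGH v).trans (hH.2 v)⟩

lemma insert_mem_MK_iff {n r a b : ℕ} {H : Finset (Sym2 ℕ)} (hH : H ∈ MK n r)
    (hab : s(a, b) ∈ EK n) (he : s(a, b) ∉ H) :
    insert s(a, b) H ∈ MK n r ↔ deg H a < r ∧ deg H b < r := by
  have hdeg : ∀ v ∈ s(a, b), deg (insert s(a, b) H) v = deg H v + 1 :=
    fun v hv => deg_insert_of_mem hv he
  constructor
  · intro hins
    have ha := hins.2 a
    have hb := hins.2 b
    rw [hdeg a (Sym2.mem_mk_left a b)] at ha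
    rw [hdeg b (Sym2.mem_mk_right a b)] at hb
    omega
  · rintro ⟨ha, hb⟩
    refine ⟨Finset.insert_subset hab hH.1, fun v => ?_⟩
    by_cases hv : v ∈ s(a, b)
    · rw [hdeg v hv]
      rcases Sym2.mem_iff.1 hv with rfl | rfl <;> omega
    · rw [deg_insert_of_notMem hv]
      exact hH.2 v

/-- The set `A_{k,k} = B_{k-1,k}` of the paper. -/
def Akk (n k : ℕ) : Set (Finset (Sym2 ℕ)) :=
  {G ∈ MK n (n - 2) | (∀ i ∈ Finset.Icc 1 (k - 1), s(i, i + 1) ∉ G) ∧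
    deg G 1 = n - 2 ∧ (∀ i ∈ Finset.Icc 2 (k - 1), deg G i = n - 3) ∧
    deg G k < n - 2}

section Akk

variable {n k : ℕ} {G : Finset (Sym2 ℕ)}

lemma notMem_mk_succ_of_lt {v : ℕ} (hv : v < k) : v ∉ s(k, k + 1) := by
  simp only [Sym2.mem_iff]
  omega

lemma erase_mem_Akk (hk : 2 ≤ k) (hG : G ∈ Akk n k) : G.erase s(k, k + 1) ∈ Akk n k := by
  obtain ⟨hM, hpath, hdeg1, hdegMid, hdegk⟩ := hG
  refine ⟨mem_MK_of_subset (Finset.erase_subset _ _) hM,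
    fun i hi hmem => hpath i hi (Finset.mem_of_mem_erase hmem), ?_, fun i hi => ?_,
    (deg_mono (Finset.erase_subset _ _) k).trans_lt hdegk⟩
  · rw [deg_erase_of_notMem (notMem_mk_succ_of_lt (by omega))]
    exact hdeg1
  · have hik : i < k := by simp only [Finset.mem_Icc] at hi; omega
    rw [deg_erase_of_notMem (notMem_mk_succ_of_lt hik)]
    exact hdegMid i hi

lemma insert_mem_Akk_iff (hk : 2 ≤ k) (hkn : k + 1 ≤ n) (hG : G ∈ Akk n k)
    (he : s(k, k + 1) ∉ G) :
    insert s(k, k + 1) G ∈ Akk n k ↔ deg G k + 1 < n - 2 ∧ deg G (k + 1) < n - 2 := by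
  obtain ⟨hM, hpath, hdeg1, hdegMid, -⟩ := hG
  have hdegk : deg (insert s(k, k + 1) G) k = deg G k + 1 :=
    deg_insert_of_mem (Sym2.mem_mk_left _ _) he
  have hpath' : ∀ i ∈ Finset.Icc 1 (k - 1), s(i, i + 1) ∉ insert s(k, k + 1) G := by
    intro i hi hmem
    simp only [Finset.mem_Icc] at hi
    rcases Finset.mem_insert.1 hmem with heq | hmem
    · rw [Sym2.eq_iff] at heq
      omega
    · exact hpath i (Finset.mem_Icc.2 hi) hmem
  have hdeg1' : deg (insert s(k, k + 1) G) 1 = n - 2 := by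
    rw [deg_insert_of_notMem (notMem_mk_succ_of_lt (by omega))]
    exact hdeg1
  have hdegMid' : ∀ i ∈ Finset.Icc 2 (k - 1), deg (insert s(k, k + 1) G) i = n - 3 := by
    intro i hi
    have hik : i < k := by simp only [Finset.mem_Icc] at hi; omega
    rw [deg_insert_of_notMem (notMem_mk_succ_of_lt hik)]
    exact hdegMid i hi
  rw [Akk, Set.mem_sep_iff, insert_mem_MK_iff hM (mk_succ_mem_EK (by omega) hkn) he, hdegk]
  constructor
  · rintro ⟨⟨-, hk1⟩, -, -, -, hk⟩
    exact ⟨hk, hk1⟩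
  · rintro ⟨hk, hk1⟩
    exact ⟨⟨by omega, hk1⟩, hpath', hdeg1', hdegMid', hk⟩

lemma Akk_sdiff_eq (hk : 2 ≤ k) (hkn : k + 1 ≤ n) :
    Akk n k \ {G ∈ Akk n k | G.erase s(k, k + 1) ∈ Akk n k ∧ insert s(k, k + 1) G ∈ Akk n k} =
      {G ∈ Akk n k | s(k, k + 1) ∉ G ∧ deg G (k + 1) < n - 2 ∧ deg G k = n - 3} ∪
        {G ∈ Akk n k | s(k, k + 1) ∉ G ∧ deg G (k + 1) = n - 2} := by
  ext G
  simp only [Set.mem_sdiff, Set.mem_union, Set.mem_sep_iff]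
  by_cases hG : G ∈ Akk n k
  swap
  · simp [hG]
  have hdeg : deg G k < n - 2 ∧ deg G (k + 1) ≤ n - 2 := ⟨hG.2.2.2.2, hG.1.2 (k + 1)⟩
  by_cases he : s(k, k + 1) ∈ G
  · simp [hG, he, erase_mem_Akk hk hG, Finset.insert_eq_of_mem he]
  · simp only [hG, he, erase_mem_Akk hk hG, insert_mem_Akk_iff hk hkn hG he, true_and,
      not_false_eq_true]
    omega

end Akk

theorem step_k_first_matching_general (n k : ℕ) (hk : 2 ≤ k) (hkn : k ≤ n - 1) :
    let Akk : Set (Finset (Sym2 ℕ)) :=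
      {G ∈ MK n (n - 2) | (∀ i ∈ Finset.Icc 1 (k - 1), s(i, i + 1) ∉ G) ∧
        deg G 1 = n - 2 ∧ (∀ i ∈ Finset.Icc 2 (k - 1), deg G i = n - 3) ∧
        deg G k < n - 2}
    let Nk : Set (Finset (Sym2 ℕ)) :=
      {G ∈ Akk | G.erase s(k, k + 1) ∈ Akk ∧ insert s(k, k + 1) G ∈ Akk}
    let Ak1 : Set (Finset (Sym2 ℕ)) := Akk \ Nk
    let B : Set (Finset (Sym2 ℕ)) :=
      {G ∈ Akk | s(k, k + 1) ∉ G ∧ deg G (k + 1) < n - 2 ∧ deg G k = n - 3}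
    let C : Set (Finset (Sym2 ℕ)) :=
      {G ∈ Akk | s(k, k + 1) ∉ G ∧ deg G (k + 1) = n - 2}
    Ak1 = B ∪ C ∧ Disjoint B C := by
  exact ⟨Akk_sdiff_eq hk (by omega),
    Set.disjoint_left.2 fun G ⟨_, _, hlt, _⟩ ⟨_, _, heq⟩ => by omega⟩

/-- Proposition 3.6(1) (Step k, first element matching): with `A_{k,k} = B_{k-1,k}`,
`N_{k,k+1} = {G ∈ A_{k,k} : G - {k,k+1} ∈ A_{k,k} and G + {k,k+1} ∈ A_{k,k}}` and
`A_{k,k+1} = A_{k,k} \ N_{k,k+1}`, we have `A_{k,k+1} = B_{k,k+1} ⊔ C_{k,k+1}`. -/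
theorem step_k_first_matching (n k : ℕ) (hn : 4 ≤ n) (hk : 2 ≤ k) (hkn : k ≤ n - 1) :
    let Akk : Set (Finset (Sym2 ℕ)) :=
      {G ∈ MK n (n - 2) | (∀ i ∈ Finset.Icc 1 (k - 1), s(i, i + 1) ∉ G) ∧
        deg G 1 = n - 2 ∧ (∀ i ∈ Finset.Icc 2 (k - 1), deg G i = n - 3) ∧
        deg G k < n - 2}
    let Nk : Set (Finset (Sym2 ℕ)) :=
      {G ∈ Akk | G.erase s(k, k + 1) ∈ Akk ∧ insert s(k, k + 1) G ∈ Akk}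
    let Ak1 : Set (Finset (Sym2 ℕ)) := Akk \ Nk
    let B : Set (Finset (Sym2 ℕ)) :=
      {G ∈ Akk | s(k, k + 1) ∉ G ∧ deg G (k + 1) < n - 2 ∧ deg G k = n - 3}
    let C : Set (Finset (Sym2 ℕ)) :=
      {G ∈ Akk | s(k, k + 1) ∉ G ∧ deg G (k + 1) = n - 2}
    Ak1 = B ∪ C ∧ Disjoint B C :=
  step_k_first_matching_general n k hk hkn
end

section
/- Let n ≥ 3 and 1 ≤ k ≤ n−1, and let B_{k,k+1} = {G ∈ M_{n−2}(K_n) : {i,i+1} ∉ G for every i ∈ [k], deg_G(1) = n−2, deg_G(i) = n−3 for every i ∈ {2,...,k}, and deg_G(k+1) < n−2}. Then B_{k,k+1} = ∅ if and only if n = k+1. -/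
/-!
If `n ≥ k + 2`, the graph whose edges are the pairs `{a, b}` of `[n]` with `min a b ≤ k` and
`|a - b| ≥ 2` lies in `B_{k,k+1}`: vertex `k + 1` has only the `k - 1` neighbours `1, …, k - 1`.

If `n = k + 1`, take `G ∈ B_{k,k+1}` and `i ∈ [k]`. Since `G` avoids the path edges at `i`, the
neighbours of `i` lie among the vertices at distance at least `2` from `i`, and there are exactly
`deg_G(i)` of those; so `i` is adjacent to all of them, in particular to `n` when `i ≤ n - 2`.
Then `deg_G(n) ≥ n - 2`, a contradiction.
-/

open Finset

def nbhd (G : Finset (Sym2 ℕ)) (n v : ℕ) : Finset ℕ := (Icc 1 n).filter (fun j => s(v, j) ∈ G)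

def farFrom (n i : ℕ) : Finset ℕ := Icc 1 n \ Icc (i - 1) (i + 1)

section Neighbourhoods

variable {G : Finset (Sym2 ℕ)} {n : ℕ}

lemma mk_mem_EK {a b : ℕ} : s(a, b) ∈ EK n ↔ a ∈ Icc 1 n ∧ b ∈ Icc 1 n ∧ a ≠ b := by
  simp [EK, and_assoc]

lemma filter_mem_eq_image_nbhd (hG : G ⊆ EK n) (v : ℕ) :
    G.filter (fun e => v ∈ e) = (nbhd G n v).image (fun j => s(v, j)) := by
  ext e
  simp only [mem_filter, mem_image, nbhd]
  constructor
  · rintro ⟨he, hv⟩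
    obtain ⟨j, rfl⟩ := Sym2.mem_iff_exists.mp hv
    exact ⟨j, ⟨(mk_mem_EK.mp (hG he)).2.1, he⟩, rfl⟩
  · rintro ⟨j, ⟨-, hj⟩, rfl⟩
    exact ⟨hj, Sym2.mem_mk_left _ _⟩

lemma deg_eq_card_nbhd (hG : G ⊆ EK n) (v : ℕ) : deg G v = (nbhd G n v).card := by
  rw [deg, filter_mem_eq_image_nbhd hG, card_image_of_injective _ fun _ _ => Sym2.congr_right.mp]

lemma deg_eq_zero_of_notMem (hG : G ⊆ EK n) {v : ℕ} (hv : v ∉ Icc 1 n) : deg G v = 0 := by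
  rw [deg_eq_card_nbhd hG, card_eq_zero, nbhd, filter_eq_empty_iff]
  exact fun _ _ h => hv (mk_mem_EK.mp (hG h)).1

end Neighbourhoods

section FarFrom

variable {n i j : ℕ}

lemma mem_farFrom : j ∈ farFrom n i ↔ j ∈ Icc 1 n ∧ (j + 2 ≤ i ∨ i + 2 ≤ j) := by
  simp only [farFrom, mem_sdiff, mem_Icc]
  omega

lemma card_farFrom : (farFrom n i).card = n - (min (i + 1) n + 1 - max (i - 1) 1) := by
  have hinter : Icc (i - 1) (i + 1) ∩ Icc 1 n = Icc (max (i - 1) 1) (min (i + 1) n) := by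
    ext j
    simp only [mem_inter, mem_Icc]
    omega
  rw [farFrom, card_sdiff, hinter, Nat.card_Icc, Nat.card_Icc, Nat.add_sub_cancel]

lemma card_farFrom_le (hn : 2 ≤ n) (hi : i ∈ Icc 1 n) : (farFrom n i).card ≤ n - 2 := by
  rw [mem_Icc] at hi
  rw [card_farFrom]
  omega

end FarFrom

section PathAvoiding

variable {G : Finset (Sym2 ℕ)} {n k : ℕ}

lemma nbhd_subset_farFrom (hG : G ⊆ EK n) (hpath : ∀ i ∈ Icc 1 k, s(i, i + 1) ∉ G) {i : ℕ}
    (hi : i ∈ Icc 1 k) : nbhd G n i ⊆ farFrom n i := by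
  intro j hj
  obtain ⟨hjn, hij⟩ := mem_filter.mp hj
  obtain ⟨-, -, hne⟩ := mk_mem_EK.mp (hG hij)
  rw [mem_Icc] at hi
  have hsucc : j ≠ i + 1 := by
    rintro rfl
    exact hpath i (mem_Icc.mpr hi) hij
  have hpred : j + 1 ≠ i := by
    rintro rfl
    exact hpath j (mem_Icc.mpr ⟨by simpa using (mem_Icc.mp hjn).1, by omega⟩) (Sym2.eq_swap ▸ hij)
  exact mem_farFrom.mpr ⟨hjn, by omega⟩

lemma nbhd_eq_farFrom (hG : G ⊆ EK n) (hpath : ∀ i ∈ Icc 1 k, s(i, i + 1) ∉ G) {i : ℕ}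
    (hi : i ∈ Icc 1 k) (hdeg : (farFrom n i).card ≤ deg G i) : nbhd G n i = farFrom n i :=
  eq_of_subset_of_card_le (nbhd_subset_farFrom hG hpath hi) (deg_eq_card_nbhd hG i ▸ hdeg)

lemma mk_last_mem_of_deg (hG : G ⊆ EK n) (hpath : ∀ i ∈ Icc 1 k, s(i, i + 1) ∉ G)
    (hd1 : deg G 1 = n - 2) (hdi : ∀ i ∈ Icc 2 k, deg G i = n - 3) {i : ℕ} (hi : i ∈ Icc 1 k)
    (hin : i + 2 ≤ n) : s(i, n) ∈ G := by
  have hdeg : (farFrom n i).card ≤ deg G i := by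
    rw [card_farFrom]
    rcases (mem_Icc.mp hi).1.eq_or_lt with rfl | h2
    · omega
    · rw [hdi i (mem_Icc.mpr ⟨h2, (mem_Icc.mp hi).2⟩)]
      omega
  have hn : n ∈ nbhd G n i := by
    rw [nbhd_eq_farFrom hG hpath hi hdeg, mem_farFrom, mem_Icc]
    omega
  exact (mem_filter.mp hn).2

lemma min_le_deg_last (hG : G ⊆ EK n) (hpath : ∀ i ∈ Icc 1 k, s(i, i + 1) ∉ G)
    (hd1 : deg G 1 = n - 2) (hdi : ∀ i ∈ Icc 2 k, deg G i = n - 3) :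
    min k (n - 2) ≤ deg G n := by
  have hsub : Icc 1 (min k (n - 2)) ⊆ nbhd G n n := by
    intro i hi
    simp only [mem_Icc, le_min_iff] at hi
    refine mem_filter.mpr ⟨mem_Icc.mpr ⟨hi.1, by omega⟩, Sym2.eq_swap ▸ ?_⟩
    exact mk_last_mem_of_deg hG hpath hd1 hdi (mem_Icc.mpr ⟨hi.1, hi.2.1⟩) (by omega)
  simpa [deg_eq_card_nbhd hG] using card_le_card hsub

end PathAvoiding

section Witness

def farGraph (n k : ℕ) : Finset (Sym2 ℕ) :=
  (EK n).filter (fun e => e.inf ≤ k ∧ e.inf + 2 ≤ e.sup)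

variable {n k : ℕ}

lemma farGraph_subset_EK : farGraph n k ⊆ EK n := filter_subset _ _

lemma mk_mem_farGraph {a b : ℕ} : s(a, b) ∈ farGraph n k ↔
    (a ∈ Icc 1 n ∧ b ∈ Icc 1 n ∧ a ≠ b) ∧ min a b ≤ k ∧ min a b + 2 ≤ max a b := by
  simp [farGraph, mk_mem_EK]

lemma nbhd_farGraph {v : ℕ} (hv : v ∈ Icc 1 n) :
    nbhd (farGraph n k) n v = (farFrom n v).filter (fun j => min v j ≤ k) := by
  ext j
  simp only [nbhd, mem_filter, mk_mem_farGraph, mem_farFrom, mem_Icc] at hv ⊢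
  omega

lemma deg_farGraph_of_le {v : ℕ} (hv : v ∈ Icc 1 k) (hkn : k ≤ n) :
    deg (farGraph n k) v = (farFrom n v).card := by
  have hv' : v ∈ Icc 1 n := mem_Icc.mpr ⟨(mem_Icc.mp hv).1, (mem_Icc.mp hv).2.trans hkn⟩
  rw [deg_eq_card_nbhd farGraph_subset_EK, nbhd_farGraph hv',
    filter_true_of_mem fun j _ => (min_le_left v j).trans (mem_Icc.mp hv).2]

lemma deg_farGraph_le (hn : 2 ≤ n) (v : ℕ) : deg (farGraph n k) v ≤ n - 2 := by
  by_cases hv : v ∈ Icc 1 n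
  · rw [deg_eq_card_nbhd farGraph_subset_EK, nbhd_farGraph hv]
    exact (card_filter_le _ _).trans (card_farFrom_le hn hv)
  · rw [deg_eq_zero_of_notMem farGraph_subset_EK hv]
    exact Nat.zero_le _

lemma deg_farGraph_succ_le (hkn : k + 1 ≤ n) : deg (farGraph n k) (k + 1) ≤ k - 1 := by
  rw [deg_eq_card_nbhd farGraph_subset_EK, nbhd_farGraph (mem_Icc.mpr ⟨by omega, hkn⟩)]
  calc _ ≤ (Icc 1 (k - 1)).card := card_le_card fun j hj => by
          simp only [mem_filter, mem_farFrom, mem_Icc] at hj ⊢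
          omega
    _ = k - 1 := by simp

end Witness

theorem Bk_empty_iff_general (n k : ℕ) (hk1 : 1 ≤ k) (hkn : k ≤ n - 1) :
    ({G ∈ MK n (n - 2) | (∀ i ∈ Finset.Icc 1 k, s(i, i + 1) ∉ G) ∧
        deg G 1 = n - 2 ∧ (∀ i ∈ Finset.Icc 2 k, deg G i = n - 3) ∧
        deg G (k + 1) < n - 2} : Set (Finset (Sym2 ℕ))) = ∅ ↔ n = k + 1 := by
  constructor
  · intro hempty
    by_contra hne
    refine (Set.eq_empty_iff_forall_notMem.mp hempty) (farGraph n k)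
      ⟨⟨farGraph_subset_EK, deg_farGraph_le (by omega)⟩, ?_, ?_, ?_, ?_⟩
    · intro i hi
      simp only [mk_mem_farGraph, mem_Icc] at hi ⊢
      omega
    · rw [deg_farGraph_of_le (mem_Icc.mpr ⟨le_rfl, hk1⟩) (by omega), card_farFrom]
      omega
    · intro i hi
      rw [mem_Icc] at hi
      rw [deg_farGraph_of_le (mem_Icc.mpr ⟨by omega, hi.2⟩) (by omega), card_farFrom]
      omega
    · exact (deg_farGraph_succ_le (by omega)).trans_lt (by omega)
  · rintro rfl
    refine Set.eq_empty_iff_forall_notMem.mpr ?_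
    rintro G ⟨⟨hG, -⟩, hpath, hd1, hdi, hlast⟩
    have := min_le_deg_last hG hpath hd1 hdi
    omega

/-- Proposition 3.6(4): the set `B_{k,k+1}` is empty if and only if `n = k + 1`. -/
theorem Bk_empty_iff (n k : ℕ) (hn : 3 ≤ n) (hk1 : 1 ≤ k) (hkn : k ≤ n - 1) :
    ({G ∈ MK n (n - 2) | (∀ i ∈ Finset.Icc 1 k, s(i, i + 1) ∉ G) ∧
        deg G 1 = n - 2 ∧ (∀ i ∈ Finset.Icc 2 k, deg G i = n - 3) ∧
        deg G (k + 1) < n - 2} : Set (Finset (Sym2 ℕ))) = ∅ ↔ n = k + 1 :=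
  Bk_empty_iff_general n k hk1 hkn
end

section
/- Let n ≥ 3. For k ∈ [n−1], let C_k be defined as follows: C_1 = {G ∈ M_{n−2}(K_n) : for every i ∈ {2,...,n}, {1,i} ∉ G and deg_G(i) = n−2}, and for 2 ≤ k ≤ n−1, C_k = {G ∈ M_{n−2}(K_n) : {i,i+1} ∉ G for every i ∈ [k−1], deg_G(1) = n−2, deg_G(i) = n−3 for every i ∈ {2,...,k−1}, deg_G(k) < n−2, and for every j ∈ {k+1,...,n}, {k,j} ∉ G and deg_G(j) = n−2}. Then the sets C_1,...,C_{n−1} are pairwise disjoint, their union C = ⊔_{k∈[n−1]} C_k has cardinality exactly n−1, and every G ∈ C has exactly C(n−1,2) edges. -/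
/-!
Each `C_k` consists of the single graph `criticalCell n k`: the complement in `K_n` of the
spanning tree `pathStar n k` made of the path `1 – 2 – ⋯ – k` and the star joining `k` to
`k + 1, …, n`. Hence it has `C(n, 2) - (n - 1) = C(n - 1, 2)` edges.

Uniqueness is degree forcing: a vertex with `m` known non-neighbours (itself included) and
degree `n - m` is adjacent to every other vertex of `[n]`. The conditions defining `C_k` give
exactly this for every vertex `j > k` (non-neighbours `j, k`) and every path vertex `p < k`
(non-neighbours `p - 1, p, p + 1`), and every edge of the complement of the tree has such an
endpoint. The cells are distinct because `{k, n}` is an edge of `criticalCell n l` for `k < l`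
but not of `criticalCell n k`.
-/

open Finset

lemma mk_mem_EK_iff {n a b : ℕ} :
    s(a, b) ∈ EK n ↔ 1 ≤ a ∧ a ≤ n ∧ 1 ≤ b ∧ b ≤ n ∧ a ≠ b := by
  simp only [EK, mem_filter, mk_mem_sym2_iff, mem_Icc, Sym2.mk_isDiag_iff]
  tauto

lemma succ_choose_two (m : ℕ) : (m + 1).choose 2 = m + m.choose 2 := by
  rw [Nat.choose_succ_succ', Nat.choose_one_right]

lemma card_Icc_one_sdiff {n : ℕ} {X : Finset ℕ} (hXn : X ⊆ Icc 1 n) :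
    #(Icc 1 n \ X) = n - #X := by
  rw [card_sdiff_of_subset hXn, Nat.card_Icc, Nat.add_sub_cancel]

lemma card_EK (n : ℕ) : #(EK n) = n.choose 2 := by
  have hdiag : (Icc 1 n).sym2.filter Sym2.IsDiag = (Icc 1 n).image Sym2.diag := by
    ext z
    induction z using Sym2.ind with
    | _ a b =>
      simp only [mem_filter, mk_mem_sym2_iff, Sym2.mk_isDiag_iff, mem_image, Sym2.diag,
        Sym2.eq_iff]
      grind
  have hsplit := card_filter_add_card_filter_not (s := (Icc 1 n).sym2) Sym2.IsDiag
  rw [hdiag, card_image_of_injective _ Sym2.diag_injective, card_sym2, Nat.card_Icc,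
    Nat.add_sub_cancel, succ_choose_two] at hsplit
  unfold EK
  omega

section Degree

variable {n v : ℕ} {H : Finset (Sym2 ℕ)}

lemma mk_self_notMem_of_subset_EK (hH : H ⊆ EK n) (v : ℕ) : s(v, v) ∉ H :=
  fun h => (mk_mem_EK_iff.1 (hH h)).2.2.2.2 rfl

lemma deg_eq_card_filter (hH : H ⊆ EK n) (v : ℕ) :
    deg H v = #{w ∈ Icc 1 n | s(v, w) ∈ H} := by
  have hnbrs : H.filter (v ∈ ·) = {w ∈ Icc 1 n | s(v, w) ∈ H}.image (s(v, ·)) := by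
    ext e
    induction e using Sym2.ind with
    | _ a b =>
      simp only [mem_filter, mem_image, mem_Icc, Sym2.mem_iff, Sym2.eq_iff]
      constructor
      · rintro ⟨he, rfl | rfl⟩ <;> have hab := mk_mem_EK_iff.1 (hH he)
        · exact ⟨b, ⟨⟨hab.2.2.1, hab.2.2.2.1⟩, he⟩, Or.inl ⟨rfl, rfl⟩⟩
        · exact ⟨a, ⟨⟨hab.1, hab.2.1⟩, Sym2.eq_swap ▸ he⟩, Or.inr ⟨rfl, rfl⟩⟩
      · rintro ⟨w, ⟨-, hw⟩, ⟨rfl, rfl⟩ | ⟨rfl, rfl⟩⟩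
        · exact ⟨hw, Or.inl rfl⟩
        · exact ⟨Sym2.eq_swap ▸ hw, Or.inr rfl⟩
  rw [deg, hnbrs, card_image_of_injective _ fun _ _ h => Sym2.congr_right.1 h]

lemma deg_eq_zero_of_notMem_Icc (hH : H ⊆ EK n) (hv : v ∉ Icc 1 n) : deg H v = 0 := by
  rw [deg_eq_card_filter hH, card_eq_zero, filter_eq_empty_iff]
  intro w _ hw
  have := mk_mem_EK_iff.1 (hH hw)
  exact hv (mem_Icc.2 ⟨this.1, this.2.1⟩)

variable {X : Finset ℕ}

lemma filter_subset_sdiff_of_forall_notMem (hX : ∀ w ∈ X, s(v, w) ∉ H) :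
    {w ∈ Icc 1 n | s(v, w) ∈ H} ⊆ Icc 1 n \ X := fun w hw =>
  mem_sdiff.2 ⟨(mem_filter.1 hw).1, fun hwX => hX w hwX (mem_filter.1 hw).2⟩

lemma deg_le_of_forall_notMem (hH : H ⊆ EK n) (hXn : X ⊆ Icc 1 n)
    (hX : ∀ w ∈ X, s(v, w) ∉ H) : deg H v ≤ n - #X := by
  rw [deg_eq_card_filter hH, ← card_Icc_one_sdiff hXn]
  exact card_le_card (filter_subset_sdiff_of_forall_notMem hX)

lemma mk_mem_of_sub_card_le_deg (hH : H ⊆ EK n) (hXn : X ⊆ Icc 1 n)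
    (hX : ∀ w ∈ X, s(v, w) ∉ H) (hdeg : n - #X ≤ deg H v) {w : ℕ} (hw : w ∈ Icc 1 n)
    (hwX : w ∉ X) : s(v, w) ∈ H := by
  rw [deg_eq_card_filter hH, ← card_Icc_one_sdiff hXn] at hdeg
  have hnbrs := eq_of_subset_of_card_le (filter_subset_sdiff_of_forall_notMem hX) hdeg
  have hw' : w ∈ {w ∈ Icc 1 n | s(v, w) ∈ H} := hnbrs ▸ mem_sdiff.2 ⟨hw, hwX⟩
  exact (mem_filter.1 hw').2

lemma deg_eq_of_forall_mem_iff (hH : H ⊆ EK n) (hXn : X ⊆ Icc 1 n)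
    (hX : ∀ w ∈ Icc 1 n, s(v, w) ∈ H ↔ w ∉ X) : deg H v = n - #X := by
  rw [deg_eq_card_filter hH, ← card_Icc_one_sdiff hXn]
  congr 1
  ext w
  simp only [mem_filter, mem_sdiff]
  exact ⟨fun ⟨hw, hvw⟩ => ⟨hw, (hX w hw).1 hvw⟩, fun ⟨hw, hwX⟩ => ⟨hw, (hX w hw).2 hwX⟩⟩

end Degree

def pathStar (n k : ℕ) : Finset (Sym2 ℕ) :=
  (Icc 1 (k - 1)).image (fun i => s(i, i + 1)) ∪ (Icc (k + 1) n).image (fun j => s(k, j))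

def criticalCell (n k : ℕ) : Finset (Sym2 ℕ) := EK n \ pathStar n k

section CriticalCell

variable {n k : ℕ}

lemma mk_mem_pathStar_iff {a b : ℕ} :
    s(a, b) ∈ pathStar n k ↔ (b = a + 1 ∧ 1 ≤ a ∧ a < k) ∨ (a = b + 1 ∧ 1 ≤ b ∧ b < k) ∨
      (a = k ∧ k < b ∧ b ≤ n) ∨ (b = k ∧ k < a ∧ a ≤ n) := by
  simp only [pathStar, mem_union, mem_image, mem_Icc, Sym2.eq_iff]
  constructor
  · rintro (⟨i, hi, ⟨rfl, rfl⟩ | ⟨rfl, rfl⟩⟩ | ⟨j, hj, ⟨rfl, rfl⟩ | ⟨rfl, rfl⟩⟩) <;> omega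
  · rintro (⟨rfl, ha⟩ | ⟨rfl, hb⟩ | ⟨rfl, hb⟩ | ⟨rfl, ha⟩)
    · exact Or.inl ⟨a, by omega, Or.inl ⟨rfl, rfl⟩⟩
    · exact Or.inl ⟨b, by omega, Or.inr ⟨rfl, rfl⟩⟩
    · exact Or.inr ⟨b, by omega, Or.inl ⟨rfl, rfl⟩⟩
    · exact Or.inr ⟨a, by omega, Or.inr ⟨rfl, rfl⟩⟩

lemma mk_mem_criticalCell_iff {a b : ℕ} :
    s(a, b) ∈ criticalCell n k ↔ (1 ≤ a ∧ a ≤ n ∧ 1 ≤ b ∧ b ≤ n ∧ a ≠ b) ∧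
      ¬((b = a + 1 ∧ 1 ≤ a ∧ a < k) ∨ (a = b + 1 ∧ 1 ≤ b ∧ b < k) ∨
        (a = k ∧ k < b ∧ b ≤ n) ∨ (b = k ∧ k < a ∧ a ≤ n)) := by
  rw [criticalCell, mem_sdiff, mk_mem_EK_iff, mk_mem_pathStar_iff]

lemma criticalCell_subset_EK : criticalCell n k ⊆ EK n := sdiff_subset

lemma card_pathStar (hk : 1 ≤ k) (hkn : k ≤ n) : #(pathStar n k) = n - 1 := by
  have hdisj : Disjoint ((Icc 1 (k - 1)).image (fun i => s(i, i + 1)))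
      ((Icc (k + 1) n).image (fun j => s(k, j))) := by
    simp only [disjoint_left, mem_image, mem_Icc, not_exists, not_and]
    rintro _ ⟨i, hi, rfl⟩ j hj hij
    rcases Sym2.eq_iff.1 hij with ⟨h, -⟩ | ⟨-, h⟩ <;> omega
  rw [pathStar, card_union_of_disjoint hdisj,
    card_image_of_injective _ fun _ _ h => by rcases Sym2.eq_iff.1 h with h | h <;> omega,
    card_image_of_injective _ fun _ _ h => Sym2.congr_right.1 h, Nat.card_Icc, Nat.card_Icc]
  omega

lemma card_criticalCell (hk : 1 ≤ k) (hkn : k ≤ n) :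
    #(criticalCell n k) = (n - 1).choose 2 := by
  have hsub : pathStar n k ⊆ EK n := by
    intro e he
    induction e using Sym2.ind with
    | _ a b =>
      rw [mk_mem_pathStar_iff] at he
      rw [mk_mem_EK_iff]
      omega
  obtain ⟨m, rfl⟩ : ∃ m, n = m + 1 := ⟨n - 1, by omega⟩
  rw [criticalCell, card_sdiff_of_subset hsub, card_EK, card_pathStar hk hkn,
    Nat.add_sub_cancel, succ_choose_two, Nat.add_sub_cancel_left]

lemma criticalCell_mem_MK (hk : 1 ≤ k) (hkn : k < n) : criticalCell n k ∈ MK n (n - 2) := by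
  refine ⟨criticalCell_subset_EK, fun v => ?_⟩
  by_cases hv : v ∈ Icc 1 n
  · rw [mem_Icc] at hv
    -- every vertex of `[n]` has a neighbour `u` in the spanning tree `pathStar n k`
    obtain ⟨u, hu, huv, htree⟩ : ∃ u, u ∈ Icc 1 n ∧ u ≠ v ∧ s(v, u) ∉ criticalCell n k := by
      rcases lt_trichotomy v k with h | rfl | h
      · exact ⟨v + 1, mem_Icc.2 (by omega), by omega, by rw [mk_mem_criticalCell_iff]; omega⟩
      · exact ⟨v + 1, mem_Icc.2 (by omega), by omega, by rw [mk_mem_criticalCell_iff]; omega⟩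
      · exact ⟨k, mem_Icc.2 (by omega), by omega, by rw [mk_mem_criticalCell_iff]; omega⟩
    have hX : ∀ w ∈ ({v, u} : Finset ℕ), s(v, w) ∉ criticalCell n k := by
      simp only [mem_insert, mem_singleton]
      rintro w (rfl | rfl)
      exacts [mk_self_notMem_of_subset_EK criticalCell_subset_EK w, htree]
    have hXn : ({v, u} : Finset ℕ) ⊆ Icc 1 n := by
      simp only [insert_subset_iff, singleton_subset_iff, mem_Icc]
      exact ⟨hv, mem_Icc.1 hu⟩
    have := deg_le_of_forall_notMem criticalCell_subset_EK hXn hX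
    rwa [card_pair huv.symm] at this
  · rw [deg_eq_zero_of_notMem_Icc criticalCell_subset_EK hv]
    exact Nat.zero_le _

end CriticalCell

section Uniqueness

variable {n k : ℕ} {G : Finset (Sym2 ℕ)}

lemma eq_criticalCell_of_forall_mk_mem (hG : G ⊆ EK n)
    (hpath : ∀ i ∈ Icc 1 (k - 1), s(i, i + 1) ∉ G)
    (hstar : ∀ j ∈ Icc (k + 1) n, s(k, j) ∉ G)
    (hlow : ∀ p ∈ Icc 1 (k - 1), ∀ q ∈ Icc 1 n, p + 1 < q → s(p, q) ∈ G)
    (htop : ∀ j ∈ Icc (k + 1) n, ∀ q ∈ Icc 1 n, q ≠ k → q ≠ j → s(j, q) ∈ G) :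
    G = criticalCell n k := by
  ext e
  induction e using Sym2.ind with
  | _ a b =>
    wlog hab : a ≤ b generalizing a b
    · rw [Sym2.eq_swap, this b a (by omega)]
    rw [mk_mem_criticalCell_iff]
    constructor
    · intro he
      refine ⟨mk_mem_EK_iff.1 (hG he), ?_⟩
      rintro (⟨rfl, ha⟩ | ⟨rfl, -⟩ | ⟨rfl, hb⟩ | ⟨rfl, ha⟩)
      · exact hpath a (mem_Icc.2 (by omega)) he
      · omega
      · exact hstar b (mem_Icc.2 (by omega)) he
      · omega
    · rintro ⟨hEK, htree⟩
      by_cases hkb : k < b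
      · rw [Sym2.eq_swap]
        exact htop b (mem_Icc.2 (by omega)) a (mem_Icc.2 (by omega)) (by omega) (by omega)
      · exact hlow a (mem_Icc.2 (by omega)) b (mem_Icc.2 (by omega)) (by omega)

lemma mk_mem_of_deg_path (hG : G ⊆ EK n) (hkn : k < n)
    (hpath : ∀ i ∈ Icc 1 (k - 1), s(i, i + 1) ∉ G)
    (hdeg1 : deg G 1 = n - 2) (hdeg : ∀ i ∈ Icc 2 (k - 1), deg G i = n - 3) :
    ∀ p ∈ Icc 1 (k - 1), ∀ q ∈ Icc 1 n, p + 1 < q → s(p, q) ∈ G := by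
  intro p hp q hq hpq
  rw [mem_Icc] at hp
  -- `max 1` discards the non-vertex `p - 1 = 0` when `p = 1`
  refine mk_mem_of_sub_card_le_deg hG (X := Icc (max 1 (p - 1)) (p + 1)) ?_ ?_ ?_ hq ?_
  · intro w
    simp only [mem_Icc]
    omega
  · intro w hw
    rw [mem_Icc] at hw
    rcases (by omega : w + 1 = p ∨ w = p ∨ w = p + 1) with rfl | rfl | rfl
    · exact Sym2.eq_swap ▸ hpath w (mem_Icc.2 (by omega))
    · exact mk_self_notMem_of_subset_EK hG w
    · exact hpath p (mem_Icc.2 (by omega))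
  · rw [Nat.card_Icc]
    rcases eq_or_lt_of_le hp.1 with rfl | hp2
    · rw [hdeg1]
      omega
    · rw [hdeg p (mem_Icc.2 ⟨hp2, hp.2⟩)]
      omega
  · rw [mem_Icc]
    omega

lemma mk_mem_of_deg_star (hG : G ⊆ EK n) (hk : 1 ≤ k)
    (hstar : ∀ j ∈ Icc (k + 1) n, s(k, j) ∉ G ∧ deg G j = n - 2) :
    ∀ j ∈ Icc (k + 1) n, ∀ q ∈ Icc 1 n, q ≠ k → q ≠ j → s(j, q) ∈ G := by
  intro j hj q hq hqk hqj
  refine mk_mem_of_sub_card_le_deg hG (X := {k, j}) ?_ ?_ ?_ hq ?_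
  · rw [mem_Icc] at hj
    simp only [insert_subset_iff, singleton_subset_iff, mem_Icc]
    omega
  · simp only [mem_insert, mem_singleton]
    rintro w (rfl | rfl)
    exacts [Sym2.eq_swap ▸ (hstar j hj).1, mk_self_notMem_of_subset_EK hG w]
  · rw [card_pair (by rw [mem_Icc] at hj; omega), (hstar j hj).2]
  · simp only [mem_insert, mem_singleton]
    omega

end Uniqueness

section Degrees

variable {n k : ℕ}

lemma deg_criticalCell_of_lt (hk : 1 ≤ k) {j : ℕ} (hkj : k < j) (hjn : j ≤ n) :
    deg (criticalCell n k) j = n - 2 := by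
  rw [deg_eq_of_forall_mem_iff criticalCell_subset_EK (X := {k, j}), card_pair (by omega)]
  · simp only [insert_subset_iff, singleton_subset_iff, mem_Icc]
    omega
  · intro w hw
    rw [mem_Icc] at hw
    simp only [mk_mem_criticalCell_iff, mem_insert, mem_singleton]
    omega

lemma deg_criticalCell_one (hk : 2 ≤ k) (hkn : k ≤ n) : deg (criticalCell n k) 1 = n - 2 := by
  rw [deg_eq_of_forall_mem_iff criticalCell_subset_EK (X := Icc 1 2), Nat.card_Icc]
  · exact Icc_subset_Icc le_rfl (by omega)
  · intro w hw
    rw [mem_Icc] at hw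
    simp only [mk_mem_criticalCell_iff, mem_Icc]
    omega

lemma deg_criticalCell_of_mem_Ioo {i : ℕ} (hi : 2 ≤ i) (hik : i < k) (hkn : k ≤ n) :
    deg (criticalCell n k) i = n - 3 := by
  rw [deg_eq_of_forall_mem_iff criticalCell_subset_EK (X := Icc (i - 1) (i + 1)), Nat.card_Icc]
  · congr 1
    omega
  · exact Icc_subset_Icc (by omega) (by omega)
  · intro w hw
    rw [mem_Icc] at hw
    simp only [mk_mem_criticalCell_iff, mem_Icc]
    omega

lemma deg_criticalCell_self_lt (hk : 2 ≤ k) (hkn : k < n) :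
    deg (criticalCell n k) k < n - 2 := by
  have hX : ∀ w ∈ Icc (k - 1) (k + 1), s(k, w) ∉ criticalCell n k := by
    intro w hw
    rw [mem_Icc] at hw
    rw [mk_mem_criticalCell_iff]
    omega
  have := deg_le_of_forall_notMem criticalCell_subset_EK (Icc_subset_Icc (by omega) hkn) hX
  rw [Nat.card_Icc] at this
  omega

end Degrees

section Characterization

variable {n k : ℕ} {G : Finset (Sym2 ℕ)}

lemma criticalCell_one_iff (hn : 2 ≤ n) :
    (G ∈ MK n (n - 2) ∧ ∀ i, 2 ≤ i → i ≤ n → s(1, i) ∉ G ∧ deg G i = n - 2) ↔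
      G = criticalCell n 1 := by
  constructor
  · rintro ⟨hMK, hstar⟩
    have hstar' : ∀ j ∈ Icc (1 + 1) n, s(1, j) ∉ G ∧ deg G j = n - 2 :=
      fun j hj => hstar j (mem_Icc.1 hj).1 (mem_Icc.1 hj).2
    exact eq_criticalCell_of_forall_mk_mem hMK.1 (by simp) (fun j hj => (hstar' j hj).1)
      (by simp) (mk_mem_of_deg_star hMK.1 le_rfl hstar')
  · rintro rfl
    refine ⟨criticalCell_mem_MK le_rfl (by omega), fun i hi hin => ⟨?_, ?_⟩⟩
    · rw [mk_mem_criticalCell_iff]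
      omega
    · exact deg_criticalCell_of_lt le_rfl hi hin

lemma criticalCell_iff (hk : 2 ≤ k) (hkn : k < n) :
    (G ∈ MK n (n - 2) ∧ (∀ i ∈ Icc 1 (k - 1), s(i, i + 1) ∉ G) ∧
      deg G 1 = n - 2 ∧ (∀ i ∈ Icc 2 (k - 1), deg G i = n - 3) ∧ deg G k < n - 2 ∧
      ∀ j ∈ Icc (k + 1) n, s(k, j) ∉ G ∧ deg G j = n - 2) ↔ G = criticalCell n k := by
  constructor
  · rintro ⟨hMK, hpath, hdeg1, hdeg, -, hstar⟩
    exact eq_criticalCell_of_forall_mk_mem hMK.1 hpath (fun j hj => (hstar j hj).1)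
      (mk_mem_of_deg_path hMK.1 hkn hpath hdeg1 hdeg)
      (mk_mem_of_deg_star hMK.1 (by omega) hstar)
  · rintro rfl
    refine ⟨criticalCell_mem_MK (by omega) hkn, fun i hi => ?_, deg_criticalCell_one hk hkn.le,
      fun i hi => ?_, deg_criticalCell_self_lt hk hkn, fun j hj => ⟨?_, ?_⟩⟩
    · rw [mem_Icc] at hi
      rw [mk_mem_criticalCell_iff]
      omega
    · rw [mem_Icc] at hi
      exact deg_criticalCell_of_mem_Ioo hi.1 (by omega) hkn.le
    · rw [mem_Icc] at hj
      rw [mk_mem_criticalCell_iff]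
      omega
    · rw [mem_Icc] at hj
      exact deg_criticalCell_of_lt (by omega) (by omega) hj.2

end Characterization

lemma criticalCell_injOn (n : ℕ) : Set.InjOn (criticalCell n) (Icc 1 (n - 1) : Finset ℕ) := by
  intro k hk l hl hkl
  rw [mem_coe, mem_Icc] at hk hl
  by_contra hne
  wlog hlt : k < l generalizing k l
  · exact this hl hk hkl.symm (Ne.symm hne) (by omega)
  have hmem : s(k, n) ∈ criticalCell n l := by
    rw [mk_mem_criticalCell_iff]
    omega
  rw [← hkl, mk_mem_criticalCell_iff] at hmem
  omega

theorem critical_cells_count_general (n : ℕ)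
    (C : ℕ → Set (Finset (Sym2 ℕ)))
    (hC1 : C 1 = {G ∈ MK n (n - 2) | ∀ i, 2 ≤ i → i ≤ n → s(1, i) ∉ G ∧ deg G i = n - 2})
    (hCk : ∀ k, 2 ≤ k → k ≤ n - 1 →
      C k = {G ∈ MK n (n - 2) | (∀ i ∈ Finset.Icc 1 (k - 1), s(i, i + 1) ∉ G) ∧
        deg G 1 = n - 2 ∧ (∀ i ∈ Finset.Icc 2 (k - 1), deg G i = n - 3) ∧
        deg G k < n - 2 ∧
        ∀ j ∈ Finset.Icc (k + 1) n, s(k, j) ∉ G ∧ deg G j = n - 2}) :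
    (∀ k ∈ Finset.Icc 1 (n - 1), ∀ l ∈ Finset.Icc 1 (n - 1), k ≠ l →
        Disjoint (C k) (C l)) ∧
    (⋃ k ∈ Finset.Icc 1 (n - 1), C k).ncard = n - 1 ∧
    (∀ G ∈ ⋃ k ∈ Finset.Icc 1 (n - 1), C k, G.card = (n - 1).choose 2) := by
  have hC : ∀ k ∈ Icc 1 (n - 1), C k = {criticalCell n k} := by
    intro k hk
    rw [mem_Icc] at hk
    ext G
    rw [Set.mem_singleton_iff]
    rcases (by omega : k = 1 ∨ 2 ≤ k) with rfl | hk2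
    · rw [hC1]
      exact criticalCell_one_iff (by omega)
    · rw [hCk k hk2 hk.2]
      exact criticalCell_iff hk2 (by omega)
  have hU : ⋃ k ∈ Icc 1 (n - 1), C k = criticalCell n '' (Icc 1 (n - 1) : Finset ℕ) := by
    rw [Set.image_eq_iUnion]
    exact Set.iUnion₂_congr hC
  refine ⟨fun k hk l hl hkl => ?_, ?_, ?_⟩
  · rw [hC k hk, hC l hl, Set.disjoint_singleton]
    exact (criticalCell_injOn n).ne hk hl hkl
  · rw [hU, (criticalCell_injOn n).ncard_image, Set.ncard_coe_finset, Nat.card_Icc]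
    omega
  · rw [hU]
    rintro G ⟨k, hk, rfl⟩
    rw [mem_coe, mem_Icc] at hk
    exact card_criticalCell hk.1 (by omega)

/-- The sets `C_1, …, C_{n-1}` of critical cells are pairwise disjoint, their union
`C = ⊔_{k ∈ [n-1]} C_k` has exactly `n - 1` elements, and every `G ∈ C` has exactly
`C(n-1,2)` edges. -/
theorem critical_cells_count (n : ℕ) (hn : 3 ≤ n)
    (C : ℕ → Set (Finset (Sym2 ℕ)))
    (hC1 : C 1 = {G ∈ MK n (n - 2) | ∀ i, 2 ≤ i → i ≤ n → s(1, i) ∉ G ∧ deg G i = n - 2})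
    (hCk : ∀ k, 2 ≤ k → k ≤ n - 1 →
      C k = {G ∈ MK n (n - 2) | (∀ i ∈ Finset.Icc 1 (k - 1), s(i, i + 1) ∉ G) ∧
        deg G 1 = n - 2 ∧ (∀ i ∈ Finset.Icc 2 (k - 1), deg G i = n - 3) ∧
        deg G k < n - 2 ∧
        ∀ j ∈ Finset.Icc (k + 1) n, s(k, j) ∉ G ∧ deg G j = n - 2}) :
    (∀ k ∈ Finset.Icc 1 (n - 1), ∀ l ∈ Finset.Icc 1 (n - 1), k ≠ l →
        Disjoint (C k) (C l)) ∧
    (⋃ k ∈ Finset.Icc 1 (n - 1), C k).ncard = n - 1 ∧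
    (∀ G ∈ ⋃ k ∈ Finset.Icc 1 (n - 1), C k, G.card = (n - 1).choose 2) :=
  critical_cells_count_general n C hC1 hCk
end

section
/- Let n ≥ 2. Define H_{1,0} = M_{n−1}(K_{n,n}) and, for i = 1,...,n, N_{1,i} = {G ∈ H_{1,i−1} : G ∖ {{a_1,b_i}} ∈ H_{1,i−1} and G ∪ {{a_1,b_i}} ∈ H_{1,i−1}} and H_{1,i} = H_{1,i−1} ∖ N_{1,i}. Then H_{1,n} = {G ∈ H_{1,0} : {a_1,b_1} ∉ G, deg_G(b_1) < n−1, and deg_G(a_1) = n−1}. -/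
open Finset Sum

section Degree

variable {G K : Finset (Sym2 BipV)} {e : Sym2 BipV} {v : BipV}

lemma degB_mono (h : G ⊆ K) (v : BipV) : degB G v ≤ degB K v :=
  card_le_card (filter_subset_filter _ h)

lemma degB_insert_of_mem (hv : v ∈ e) (he : e ∉ G) : degB (insert e G) v = degB G v + 1 := by
  rw [degB, filter_insert, if_pos hv, card_insert_of_notMem fun h => he (mem_filter.1 h).1, degB]

lemma degB_insert_le (e : Sym2 BipV) (v : BipV) : degB (insert e G) v ≤ degB G v + 1 := by
  rw [degB, filter_insert]
  split_ifs
  · exact card_insert_le _ _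
  · exact Nat.le_succ _

lemma degB_insert_of_notMem (hv : v ∉ e) : degB (insert e G) v = degB G v := by
  rw [degB, filter_insert, if_neg hv, degB]

lemma degB_erase_add_one (he : e ∈ G) (hv : v ∈ e) : degB (G.erase e) v + 1 = degB G v := by
  rw [← degB_insert_of_mem hv (notMem_erase e G), insert_erase he]

lemma degB_erase_of_notMem (hv : v ∉ e) : degB (G.erase e) v = degB G v := by
  rw [degB, degB, filter_erase _ e G]
  exact congrArg card (erase_eq_of_notMem fun h => hv (mem_filter.1 h).2)

end Degree

section CompleteBipartite

variable {m n : ℕ} {G : Finset (Sym2 BipV)}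

lemma mem_EKbip {i j : ℕ} : s(inl i, inr j) ∈ EKbip m n ↔ i ∈ Icc 1 m ∧ j ∈ Icc 1 n := by
  simp [EKbip]

lemma filter_inl_mem_eq_image (hG : G ⊆ EKbip m n) (x : ℕ) :
    G.filter (inl x ∈ ·) =
      ((Icc 1 n).filter fun j => s(inl x, inr j) ∈ G).image fun j => s(inl x, inr j) := by
  ext e
  constructor
  · intro he
    obtain ⟨heG, hx⟩ := mem_filter.1 he
    obtain ⟨⟨i, j⟩, hij, rfl⟩ := mem_image.1 (hG heG)
    simp_all
  · intro he
    obtain ⟨j, hj, rfl⟩ := mem_image.1 he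
    simp_all

lemma filter_inr_mem_eq_image (hG : G ⊆ EKbip m n) (y : ℕ) :
    G.filter (inr y ∈ ·) =
      ((Icc 1 m).filter fun i => s(inl i, inr y) ∈ G).image fun i => s(inl i, inr y) := by
  ext e
  constructor
  · intro he
    obtain ⟨heG, hy⟩ := mem_filter.1 he
    obtain ⟨⟨i, j⟩, hij, rfl⟩ := mem_image.1 (hG heG)
    simp_all
  · intro he
    obtain ⟨j, hj, rfl⟩ := mem_image.1 he
    simp_all


lemma degB_inl_add_card_missing (hG : G ⊆ EKbip m n) (x : ℕ) :
    degB G (inl x) + #{j ∈ Icc 1 n | s(inl x, inr j) ∉ G} = n := by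
  have hinj : Function.Injective fun j : ℕ => (s(inl x, inr j) : Sym2 BipV) := fun j k h => by
    simpa using h
  rw [degB, filter_inl_mem_eq_image hG, card_image_of_injective _ hinj,
    card_filter_add_card_filter_not, Nat.card_Icc, Nat.add_sub_cancel]

lemma degB_inr_add_card_missing (hG : G ⊆ EKbip m n) (y : ℕ) :
    degB G (inr y) + #{i ∈ Icc 1 m | s(inl i, inr y) ∉ G} = m := by
  have hinj : Function.Injective fun i : ℕ => (s(inl i, inr y) : Sym2 BipV) := fun i k h => by
    simpa using h
  rw [degB, filter_inr_mem_eq_image hG, card_image_of_injective _ hinj,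
    card_filter_add_card_filter_not, Nat.card_Icc, Nat.add_sub_cancel]

lemma degB_inl_add_two_le (hG : G ⊆ EKbip m n) {x j k : ℕ} (hj : j ∈ Icc 1 n) (hk : k ∈ Icc 1 n)
    (hjk : j ≠ k) (hjG : s(inl x, inr j) ∉ G) (hkG : s(inl x, inr k) ∉ G) :
    degB G (inl x) + 2 ≤ n := by
  have hpair : ({j, k} : Finset ℕ) ⊆ {j ∈ Icc 1 n | s(inl x, inr j) ∉ G} := by
    simp [insert_subset_iff, hj, hk, hjG, hkG]
  have := card_le_card hpair
  rw [card_pair hjk] at this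
  have := degB_inl_add_card_missing hG x
  omega

lemma degB_inr_add_two_le (hG : G ⊆ EKbip m n) {y i k : ℕ} (hi : i ∈ Icc 1 m) (hk : k ∈ Icc 1 m)
    (hik : i ≠ k) (hiG : s(inl i, inr y) ∉ G) (hkG : s(inl k, inr y) ∉ G) :
    degB G (inr y) + 2 ≤ m := by
  have hpair : ({i, k} : Finset ℕ) ⊆ {i ∈ Icc 1 m | s(inl i, inr y) ∉ G} := by
    simp [insert_subset_iff, hi, hk, hiG, hkG]
  have := card_le_card hpair
  rw [card_pair hik] at this
  have := degB_inr_add_card_missing hG y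
  omega

lemma mem_of_degB_inl_eq_sub_one (hG : G ⊆ EKbip m n) {x j k : ℕ} (hj : j ∈ Icc 1 n)
    (hk : k ∈ Icc 1 n) (hjk : j ≠ k) (hkG : s(inl x, inr k) ∉ G)
    (hdeg : degB G (inl x) = n - 1) : s(inl x, inr j) ∈ G := by
  by_contra hjG
  have := degB_inl_add_two_le hG hj hk hjk hjG hkG
  omega

lemma mem_of_degB_inr_eq_sub_one (hG : G ⊆ EKbip m n) {y i k : ℕ} (hi : i ∈ Icc 1 m)
    (hk : k ∈ Icc 1 m) (hik : i ≠ k) (hkG : s(inl k, inr y) ∉ G)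
    (hdeg : degB G (inr y) = m - 1) : s(inl i, inr y) ∈ G := by
  by_contra hiG
  have := degB_inr_add_two_le hG hi hk hik hiG hkG
  omega

end CompleteBipartite

section MatchingComplex

variable {m n r : ℕ} {G K : Finset (Sym2 BipV)}

lemma mem_MBip_of_subset (hK : K ∈ MBip m n r) (h : G ⊆ K) : G ∈ MBip m n r :=
  ⟨h.trans hK.1, fun v => (degB_mono h v).trans (hK.2 v)⟩

lemma insert_mem_MBip (hG : G ∈ MBip m n r) {i j : ℕ} (hi : i ∈ Icc 1 m) (hj : j ∈ Icc 1 n)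
    (hi_deg : degB G (inl i) < r) (hj_deg : degB G (inr j) < r) :
    insert s(inl i, inr j) G ∈ MBip m n r := by
  refine ⟨insert_subset (mem_EKbip.2 ⟨hi, hj⟩) hG.1, fun v => ?_⟩
  by_cases hv : v ∈ s(inl i, inr j)
  · have := degB_insert_le (G := G) s(inl i, inr j) v
    rcases Sym2.mem_iff.1 hv with rfl | rfl <;> omega
  · rw [degB_insert_of_notMem hv]
    exact hG.2 v

end MatchingComplex

/-- The element matching along `a` pairs `G ∖ {a}` with `G ∪ {a}` whenever both lie in `S`;
these are the faces it leaves unpaired, so `H_{1,i} = unmatched H_{1,i-1} {a_1, b_i}`. -/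
def unmatched {α : Type*} [DecidableEq α] (S : Set (Finset α)) (a : α) : Set (Finset α) :=
  S \ {G ∈ S | G.erase a ∈ S ∧ insert a G ∈ S}

lemma mem_unmatched {α : Type*} [DecidableEq α] {S : Set (Finset α)} {a : α} {G : Finset α} :
    G ∈ unmatched S a ↔ G ∈ S ∧ (G.erase a ∈ S → insert a G ∉ S) := by
  simp only [unmatched, Set.mem_sdiff, Set.mem_sep_iff, not_and]
  tauto

def criticalFaces (n : ℕ) : Set (Finset (Sym2 BipV)) :=
  {G ∈ MBip n n (n - 1) | s(inl 1, inr 1) ∉ G ∧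
    degB G (inr 1) < n - 1 ∧ degB G (inl 1) = n - 1}

def blockedFaces (n i : ℕ) : Set (Finset (Sym2 BipV)) :=
  {G ∈ MBip n n (n - 1) | ∀ j ∈ Icc 1 i, s(inl 1, inr j) ∉ G ∧ degB G (inr j) = n - 1}

section Stages

variable {n i k j : ℕ} {G : Finset (Sym2 BipV)}

lemma criticalFaces_subset_MBip : criticalFaces n ⊆ MBip n n (n - 1) := fun _ hG => hG.1

lemma blockedFaces_subset_MBip : blockedFaces n i ⊆ MBip n n (n - 1) := fun _ hG => hG.1

lemma blockedFaces_zero : blockedFaces n 0 = MBip n n (n - 1) := by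
  ext G
  simp [blockedFaces]

lemma blockedFaces_anti (h : i ≤ k) : blockedFaces n k ⊆ blockedFaces n i :=
  fun _ hG => ⟨hG.1, fun j hj => hG.2 j (Icc_subset_Icc_right h hj)⟩

lemma erase_mem_blockedFaces (hG : G ∈ blockedFaces n k) (hkj : k < j) :
    G.erase s(inl 1, inr j) ∈ blockedFaces n k := by
  refine ⟨mem_MBip_of_subset hG.1 (erase_subset _ _), fun l hl => ?_⟩
  have hlj : l ≠ j := by grind
  obtain ⟨hlG, hl_deg⟩ := hG.2 l hl
  exact ⟨fun h => hlG (mem_of_mem_erase h), by rwa [degB_erase_of_notMem (by simpa using hlj)]⟩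

lemma insert_mem_blockedFaces (hG : G ∈ blockedFaces n k) (hkj : k < j) (hjn : j ≤ n)
    (ha : degB G (inl 1) < n - 1) (hb : degB G (inr j) < n - 1) :
    insert s(inl 1, inr j) G ∈ blockedFaces n k := by
  have h1 : 1 ∈ Icc 1 n := mem_Icc.2 ⟨le_rfl, by omega⟩
  have hj : j ∈ Icc 1 n := mem_Icc.2 ⟨by omega, hjn⟩
  refine ⟨insert_mem_MBip hG.1 h1 hj ha hb, fun l hl => ?_⟩
  have hlj : l ≠ j := by grind
  obtain ⟨hlG, hl_deg⟩ := hG.2 l hl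
  exact ⟨by simpa [hlj] using hlG, by rwa [degB_insert_of_notMem (by simpa using hlj)]⟩

lemma blockedFaces_self_eq_empty (hn : 2 ≤ n) : blockedFaces n n = ∅ := by
  refine Set.eq_empty_of_forall_notMem fun G hG => ?_
  have h1 : 1 ∈ Icc 1 n := mem_Icc.2 ⟨le_rfl, by omega⟩
  have h2 : 2 ∈ Icc 1 n := mem_Icc.2 ⟨by omega, hn⟩
  have hfull : ∀ j ∈ Icc 1 n, s(inl 2, inr j) ∈ G := fun j hj =>
    mem_of_degB_inr_eq_sub_one hG.1.1 h2 h1 (by decide) (hG.2 j hj).1 (hG.2 j hj).2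
  have hdeg := degB_inl_add_card_missing hG.1.1 2
  rw [filter_false_of_mem fun j hj hjG => hjG (hfull j hj), card_empty] at hdeg
  have := hG.1.2 (inl 2)
  omega

end Stages

section Step

variable {n i : ℕ}

lemma criticalFaces_subset_unmatched (hn : 2 ≤ n) (hi : i < n) :
    criticalFaces n ⊆ unmatched (criticalFaces n ∪ blockedFaces n i) s(inl 1, inr (i + 1)) := by
  intro G hG
  obtain ⟨hM, h1G, hb1, ha1⟩ := hG
  refine mem_unmatched.2 ⟨Or.inl ⟨hM, h1G, hb1, ha1⟩, fun herase hinsert => ?_⟩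
  rcases Nat.eq_zero_or_pos i with rfl | hi0
  · rw [zero_add] at hinsert
    have hdeg := degB_insert_of_mem (Sym2.mem_mk_left (inl 1) (inr 1)) h1G
    have := (Set.union_subset criticalFaces_subset_MBip blockedFaces_subset_MBip hinsert).2 (inl 1)
    omega
  · have h1 : 1 ∈ Icc 1 n := mem_Icc.2 ⟨le_rfl, by omega⟩
    have hmem : s(inl 1, inr (i + 1)) ∈ G :=
      mem_of_degB_inl_eq_sub_one hM.1 (mem_Icc.2 ⟨by omega, hi⟩) h1 (by omega) h1G ha1
    have ha1' := degB_erase_add_one hmem (Sym2.mem_mk_left _ _)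
    have hb1' : degB (G.erase s(inl 1, inr (i + 1))) (inr 1) = degB G (inr 1) :=
      degB_erase_of_notMem (by simp; omega)
    rcases herase with ⟨-, -, -, ha⟩ | ⟨-, hB⟩
    · omega
    · have := (hB 1 (mem_Icc.2 ⟨le_rfl, hi0⟩)).2
      omega

lemma blockedFaces_succ_subset_unmatched :
    blockedFaces n (i + 1) ⊆
      unmatched (criticalFaces n ∪ blockedFaces n i) s(inl 1, inr (i + 1)) := by
  intro G hG
  refine mem_unmatched.2 ⟨Or.inr (blockedFaces_anti (Nat.le_succ i) hG), fun _ hinsert => ?_⟩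
  obtain ⟨hnot, hdeg⟩ := hG.2 (i + 1) (by simp)
  have hdeg' := degB_insert_of_mem (Sym2.mem_mk_right (inl 1) (inr (i + 1))) hnot
  have := (Set.union_subset criticalFaces_subset_MBip blockedFaces_subset_MBip hinsert).2
    (inr (i + 1))
  omega

lemma unmatched_subset_criticalFaces_union (hi : i < n) :
    unmatched (criticalFaces n ∪ blockedFaces n i) s(inl 1, inr (i + 1)) ⊆
      criticalFaces n ∪ blockedFaces n (i + 1) := by
  intro G hG
  obtain ⟨hGS, hrem⟩ := mem_unmatched.1 hG
  by_cases hA : G ∈ criticalFaces n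
  · exact Or.inl hA
  have hB : G ∈ blockedFaces n i := hGS.resolve_left hA
  suffices s(inl 1, inr (i + 1)) ∉ G ∧ degB G (inr (i + 1)) = n - 1 by
    refine Or.inr ⟨hB.1, fun j hj => ?_⟩
    rcases (mem_Icc.1 hj).2.lt_or_eq with hji | rfl
    · exact hB.2 j (mem_Icc.2 ⟨(mem_Icc.1 hj).1, Nat.le_of_lt_succ hji⟩)
    · exact this
  by_cases hmem : s(inl 1, inr (i + 1)) ∈ G
  · refine absurd (by rwa [insert_eq_of_mem hmem]) (hrem (Or.inr ?_))
    exact erase_mem_blockedFaces hB (Nat.lt_succ_self i)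
  refine ⟨hmem, (hB.1.2 _).antisymm (not_lt.1 fun hb => ?_)⟩
  have ha : degB G (inl 1) < n - 1 := by
    rcases Nat.eq_zero_or_pos i with rfl | hi0
    · exact (hB.1.2 _).lt_of_ne fun ha => hA ⟨hB.1, hmem, hb, ha⟩
    · have h1 : 1 ∈ Icc 1 n := mem_Icc.2 ⟨le_rfl, by omega⟩
      have := degB_inl_add_two_le hB.1.1 h1 (mem_Icc.2 ⟨by omega, hi⟩) (by omega)
        (hB.2 1 (mem_Icc.2 ⟨le_rfl, hi0⟩)).1 hmem
      omega
  refine hrem (by rwa [erase_eq_of_notMem hmem]) (Or.inr ?_)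
  exact insert_mem_blockedFaces hB (Nat.lt_succ_self i) hi ha hb

lemma unmatched_criticalFaces_union_blockedFaces (hn : 2 ≤ n) (hi : i < n) :
    unmatched (criticalFaces n ∪ blockedFaces n i) s(inl 1, inr (i + 1)) =
      criticalFaces n ∪ blockedFaces n (i + 1) :=
  (unmatched_subset_criticalFaces_union hi).antisymm
    (Set.union_subset (criticalFaces_subset_unmatched hn hi) blockedFaces_succ_subset_unmatched)

end Step

/-- Claim 4.1 (Step 1 for `K_{n,n}`): starting from `H_{1,0} = M_{n-1}(K_{n,n})` and
performing, for `i = 1, …, n`, the element matching using the vertex `{a_1, b_i}`, the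
remaining set of critical cells is
`H_{1,n} = {G ∈ H_{1,0} : {a_1,b_1} ∉ G, deg_G(b_1) < n-1 and deg_G(a_1) = n-1}`. -/
theorem bipartite_step_one (n : ℕ) (hn : 2 ≤ n)
    (H : ℕ → Set (Finset (Sym2 BipV)))
    (hH0 : H 0 = MBip n n (n - 1))
    (hstep : ∀ i, 1 ≤ i → i ≤ n →
      H i = H (i - 1) \
        {G ∈ H (i - 1) | G.erase s(Sum.inl 1, Sum.inr i) ∈ H (i - 1) ∧
          insert s(Sum.inl 1, Sum.inr i) G ∈ H (i - 1)}) :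
    H n = {G ∈ H 0 | s(Sum.inl 1, Sum.inr 1) ∉ G ∧
      degB G (Sum.inr 1) < n - 1 ∧ degB G (Sum.inl 1) = n - 1} := by
  have hstages : ∀ i ≤ n, H i = criticalFaces n ∪ blockedFaces n i := by
    intro i
    induction i with
    | zero =>
      intro _
      rw [hH0, blockedFaces_zero, Set.union_eq_right.2 criticalFaces_subset_MBip]
    | succ i ih =>
      intro hi
      have h := hstep (i + 1) (Nat.le_add_left 1 i) hi
      rw [Nat.add_sub_cancel, ih (Nat.le_of_succ_le hi)] at h
      exact h.trans (unmatched_criticalFaces_union_blockedFaces hn hi)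
  rw [hstages n le_rfl, blockedFaces_self_eq_empty hn, Set.union_empty, hH0]
  rfl
end
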